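/- arXiv:2510.15640 — 9 statements merged into one kernel-verified Lean document; each statement's English description precedes it below -/
import Mathlib

section
/- Let (A, ·, {,,}) be a Nambu-Poisson algebra over a field k of characteristic 0, V a k-vector space, μ: A→End(V) a linear map and ρ: A×A→End(V) a skew-symmetric bilinear map. Then (V;μ,ρ) is a representation of the Nambu-Poisson algebra A if and only if the operations (a,u)·_⋉(b,v) := (a·b, μ(a)v + μ(b)u) and {(a,u),(b,v),(c,w)}_⋉ := ({a,b,c}, ρ(a,b)w + ρ(b,c)u + ρ(c,a)v) make A⊕V into a Nambu-Poisson algebra. -/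
/-!
Each axiom of `A ⊕ V` has as `A`-component the same axiom of `A`, and as `V`-component an
expression additive in the `V`-entries of its arguments. Evaluating at arguments with a single
nonzero `V`-entry `(0, v)` isolates one representation identity per slot; conversely, the
representation identities, with the skew-symmetry of `ρ` and the commutativity of `μ`,
account for every slot.
-/

namespace NPPaper

variable {A V : Type*} [AddCommGroup A] [AddCommGroup V]

/-- A commutative associative multiplication (axioms on a plain binary operation). -/
def IsCommAssocFun (m : A → A → A) : Prop :=
  (∀ a b, m a b = m b a) ∧ (∀ a b c, m (m a b) c = m a (m b c))

/-- A 3-Lie bracket: skew-symmetric and satisfying the fundamental identity. -/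
def IsThreeLieFun (br : A → A → A → A) : Prop :=
  (∀ a b c, br a b c = - br b a c) ∧ (∀ a b c, br a b c = - br a c b) ∧
  (∀ a b c d e, br a b (br c d e) =
      br (br a b c) d e + br c (br a b d) e + br c d (br a b e))

/-- A Nambu-Poisson structure: commutative associative product, 3-Lie bracket,
and the Leibniz rule. -/
def IsNambuPoissonFun (m : A → A → A) (br : A → A → A → A) : Prop :=
  IsCommAssocFun m ∧ IsThreeLieFun br ∧
  (∀ a b c d, br a b (m c d) = m (br a b c) d + m c (br a b d))

/-- A representation of a 3-Lie algebra (pointwise form, skew-symmetry included). -/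
def IsThreeLieRepFun (br : A → A → A → A) (ρ : A → A → V → V) : Prop :=
  (∀ a b v, ρ a b v = - ρ b a v) ∧
  (∀ a b c d v, ρ a b (ρ c d v) - ρ c d (ρ a b v) =
      ρ (br a b c) d v + ρ c (br a b d) v) ∧
  (∀ a b c d v, ρ (br a b c) d v =
      ρ a b (ρ c d v) + ρ b c (ρ a d v) + ρ c a (ρ b d v))

/-- A representation of a Nambu-Poisson algebra (pointwise form). -/
def IsNPRepFun (m : A → A → A) (br : A → A → A → A)
    (μ : A → V → V) (ρ : A → A → V → V) : Prop :=
  (∀ a b v, μ (m a b) v = μ a (μ b v)) ∧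
  IsThreeLieRepFun br ρ ∧
  (∀ a b c v, μ (br a b c) v = ρ a b (μ c v) - μ c (ρ a b v)) ∧
  (∀ a b c v, ρ a (m b c) v = μ b (ρ a c v) + μ c (ρ a b v))

/-- A Harrison 2-cocycle of a commutative associative algebra with coefficients
in a representation. -/
def IsHarrison2CocycleFun (m : A → A → A) (μ : A → V → V) (φ : A → A → V) : Prop :=
  (∀ a b, φ a b = φ b a) ∧
  (∀ a b c, μ a (φ b c) - φ (m a b) c + φ a (m b c) - μ c (φ a b) = 0)

/-- A 2-cocycle of a 3-Lie algebra with coefficients in a representation. -/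
def IsThreeLie2CocycleFun (br : A → A → A → A) (ρ : A → A → V → V)
    (ψ : A → A → A → V) : Prop :=
  (∀ a b c, ψ a b c = - ψ b a c) ∧ (∀ a b c, ψ a b c = - ψ a c b) ∧
  (∀ a b c d e, ψ a b (br c d e) + ρ a b (ψ c d e) =
      ψ (br a b c) d e + ψ c (br a b d) e + ψ c d (br a b e)
      + ρ d e (ψ a b c) + ρ e c (ψ a b d) + ρ c d (ψ a b e))

/-- A Nambu-Poisson 2-cocycle. -/
def IsNP2CocycleFun (m : A → A → A) (br : A → A → A → A)
    (μ : A → V → V) (ρ : A → A → V → V)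
    (φ : A → A → V) (ψ : A → A → A → V) : Prop :=
  IsHarrison2CocycleFun m μ φ ∧ IsThreeLie2CocycleFun br ρ ψ ∧
  (∀ a b c d, ψ a b (m c d) + ρ a b (φ c d) =
      φ c (br a b d) + μ c (ψ a b d) + φ (br a b c) d + μ d (ψ a b c))

/-- A Poisson algebra structure. -/
def IsPoissonFun (m : A → A → A) (pb : A → A → A) : Prop :=
  IsCommAssocFun m ∧
  (∀ a b, pb a b = - pb b a) ∧
  (∀ a b c, pb a (pb b c) = pb (pb a b) c + pb b (pb a c)) ∧
  (∀ a b c, pb a (m b c) = m (pb a b) c + m b (pb a c))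

/-- A representation of a Poisson algebra (pointwise form). -/
def IsPoissonRepFun (m : A → A → A) (pb : A → A → A) (μ ρb : A → V → V) : Prop :=
  (∀ a b v, μ (m a b) v = μ a (μ b v)) ∧
  (∀ a b v, ρb (pb a b) v = ρb a (ρb b v) - ρb b (ρb a v)) ∧
  (∀ a b v, μ (pb a b) v = ρb a (μ b v) - μ b (ρb a v)) ∧
  (∀ a b v, ρb (m a b) v = μ a (ρb b v) + μ b (ρb a v))

/-- A Poisson 2-cocycle. -/
def IsPoisson2CocycleFun (m pb : A → A → A) (μ ρb : A → V → V)
    (φ ψb : A → A → V) : Prop :=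
  IsHarrison2CocycleFun m μ φ ∧
  (∀ a b, ψb a b = - ψb b a) ∧
  (∀ a b c, ρb a (ψb b c) + ρb b (ψb c a) + ρb c (ψb a b)
      + ψb a (pb b c) + ψb b (pb c a) + ψb c (pb a b) = 0) ∧
  (∀ a b c, ψb a (m b c) + ρb a (φ b c) =
      φ b (pb a c) + μ b (ψb a c) + φ (pb a b) c + μ c (ψb a b))

/-- A Nijenhuis operator on a Nambu-Poisson algebra. -/
def IsNijenhuisFun (m : A → A → A) (br : A → A → A → A) (N : A → A) : Prop :=
  (∀ a b, m (N a) (N b) = N (m (N a) b + m a (N b) - N (m a b))) ∧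
  (∀ a b c, br (N a) (N b) (N c) =
      N (br (N a) (N b) c + br (N a) b (N c) + br a (N b) (N c)
        - N (br (N a) b c + br a (N b) c + br a b (N c) - N (br a b c))))

/-- The total multiplication `a ⊙ b = a ⋄ b + b ⋄ a + a * b` of an NS-commutative algebra. -/
def odotFun (d s : A → A → A) (a b : A) : A := d a b + d b a + s a b

/-- The total bracket `{{a,b,c}} = [a,b,c] + [b,c,a] + [c,a,b] + ⟦a,b,c⟧` of an NS-3-Lie algebra. -/
def ttotFun (t l : A → A → A → A) (a b c : A) : A :=
  t a b c + t b c a + t c a b + l a b c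

/-- An NS-commutative algebra. -/
def IsNSCommFun (d s : A → A → A) : Prop :=
  (∀ a b, s a b = s b a) ∧
  (∀ a b c, d a (d b c) = d (odotFun d s a b) c) ∧
  (∀ a b c, d a (s b c) + s a (odotFun d s b c) = d b (s a c) + s b (odotFun d s a c))

/-- An NS-3-Lie algebra. -/
def IsNSThreeLieFun (t l : A → A → A → A) : Prop :=
  (∀ a b c, t a b c = - t b a c) ∧
  (∀ a b c, l a b c = - l b a c) ∧ (∀ a b c, l a b c = - l a c b) ∧
  (∀ a b c d e, t a b (t c d e) =
      t (ttotFun t l a b c) d e + t c (ttotFun t l a b d) e + t c d (t a b e)) ∧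
  (∀ a b c d e, t (ttotFun t l a b c) d e =
      t a b (t c d e) + t b c (t a d e) + t c a (t b d e)) ∧
  (∀ a b c d e, l a b (ttotFun t l c d e) + t a b (l c d e) =
      l (ttotFun t l a b c) d e + l c (ttotFun t l a b d) e + l c d (ttotFun t l a b e)
      + t d e (l a b c) + t e c (l a b d) + t c d (l a b e))

/-- An NS-Nambu-Poisson algebra. -/
def IsNSNambuPoissonFun (d s : A → A → A) (t l : A → A → A → A) : Prop :=
  IsNSCommFun d s ∧ IsNSThreeLieFun t l ∧
  (∀ a b c x, d (ttotFun t l a b c) x = t a b (d c x) - d c (t a b x)) ∧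
  (∀ a b c x, t (odotFun d s a b) c x = d a (t b c x) + d b (t a c x)) ∧
  (∀ a b c x, l a b (odotFun d s c x) + t a b (s c x) =
      s c (ttotFun t l a b x) + d c (l a b x) + s (ttotFun t l a b c) x + d x (l a b c))

/-- A `(φ,ψ)`-twisted O-operator. -/
def IsTwistedOFun (m : A → A → A) (br : A → A → A → A)
    (μ : A → V → V) (ρ : A → A → V → V)
    (φ : A → A → V) (ψ : A → A → A → V) (r : V → A) : Prop :=
  (∀ u v, m (r u) (r v) = r (μ (r u) v + μ (r v) u + φ (r u) (r v))) ∧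
  (∀ u v w, br (r u) (r v) (r w) =
      r (ρ (r u) (r v) w + ρ (r v) (r w) u + ρ (r w) (r u) v + ψ (r u) (r v) (r w)))

def semidirectMul (m : A → A → A) (μ : A → V →+ V) (p q : A × V) : A × V :=
  (m p.1 q.1, μ p.1 q.2 + μ q.1 p.2)

def semidirectBracket (br : A → A → A → A) (ρ : A → A → V →+ V) (p q r : A × V) : A × V :=
  (br p.1 q.1 r.1, ρ p.1 q.1 r.2 + ρ q.1 r.1 p.2 + ρ r.1 p.1 q.2)

variable {m : A → A → A} {br : A → A → A → A} {μ : A → V →+ V} {ρ : A → A → V →+ V}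

theorem isCommAssocFun_semidirectMul_iff (hm : IsCommAssocFun m) :
    IsCommAssocFun (semidirectMul m μ) ↔ ∀ a b v, μ (m a b) v = μ a (μ b v) := by
  obtain ⟨hcomm, hassoc⟩ := hm
  constructor
  · rintro ⟨-, hassoc'⟩ a b v
    simpa [semidirectMul] using congrArg Prod.snd (hassoc' (a, 0) (b, 0) (0, v))
  · intro hμ
    have hμ_comm : ∀ a b v, μ a (μ b v) = μ b (μ a v) := fun a b v => by
      rw [← hμ, hcomm, hμ]
    refine ⟨fun p q => Prod.ext (hcomm _ _) (add_comm _ _),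
      fun ⟨a, u⟩ ⟨b, v⟩ ⟨c, w⟩ => Prod.ext (hassoc a b c) ?_⟩
    simp only [semidirectMul, map_add, hμ, hμ_comm c a, hμ_comm c b]
    abel

theorem isThreeLieFun_semidirectBracket_iff (hbr : IsThreeLieFun br) :
    IsThreeLieFun (semidirectBracket br ρ) ↔ IsThreeLieRepFun br (fun a b v => ρ a b v) := by
  obtain ⟨hskew₁, hskew₂, hFI⟩ := hbr
  constructor
  · rintro ⟨hskew₁', -, hFI'⟩
    have hρ : ∀ a b v, ρ a b v = -ρ b a v := fun a b v => by
      simpa [semidirectBracket] using congrArg Prod.snd (hskew₁' (a, 0) (b, 0) (0, v))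
    refine ⟨hρ, fun a b c d v => ?_, fun a b c d v => ?_⟩ <;> dsimp only
    · have h := congrArg Prod.snd (hFI' (a, 0) (b, 0) (c, 0) (d, 0) (0, v))
      simp only [semidirectBracket, Prod.snd_add, map_zero, add_zero] at h
      rw [h]
      abel
    · -- the fundamental identity with `v` in the first slot, read through skew-symmetry
      have h := congrArg Prod.snd (hFI' (0, v) (d, 0) (a, 0) (b, 0) (c, 0))
      simp only [semidirectBracket, Prod.snd_add, map_zero, add_zero, zero_add] at h
      rw [hρ d, hρ d a, hρ d b, hρ d c, map_neg, map_neg, map_neg] at h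
      rw [← neg_inj, h]
      abel
  · rintro ⟨hρ, hρ_comm, hρ_bracket⟩
    dsimp only at hρ hρ_comm hρ_bracket
    have hρ_bracket' : ∀ a b c d v,
        ρ a (br b c d) v = ρ c d (ρ a b v) + ρ d b (ρ a c v) + ρ b c (ρ a d v) := by
      intro a b c d v
      rw [hρ a, hρ_bracket, hρ b a, hρ c a, hρ d a, map_neg, map_neg, map_neg]
      abel
    refine ⟨fun ⟨a, u⟩ ⟨b, v⟩ ⟨c, w⟩ => Prod.ext (hskew₁ a b c) ?_,
      fun ⟨a, u⟩ ⟨b, v⟩ ⟨c, w⟩ => Prod.ext (hskew₂ a b c) ?_,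
      fun ⟨a, u⟩ ⟨b, v⟩ ⟨c, w⟩ ⟨d, x⟩ ⟨e, y⟩ => Prod.ext (hFI a b c d e) ?_⟩
    · simp only [semidirectBracket, Prod.snd_neg]
      rw [hρ a b w, hρ b c u, hρ c a v]
      abel
    · simp only [semidirectBracket, Prod.snd_neg]
      rw [hρ a b w, hρ b c u, hρ c a v]
      abel
    · simp only [semidirectBracket, Prod.snd_add, map_add]
      rw [eq_add_of_sub_eq (hρ_comm a b c d y), eq_add_of_sub_eq (hρ_comm a b d e w),
        eq_add_of_sub_eq (hρ_comm a b e c x), hρ_bracket' b c d e u, hρ_bracket c d e a v]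
      abel

theorem semidirect_leibniz_iff (hρ : ∀ a b v, ρ a b v = -ρ b a v)
    (hL : ∀ a b c d, br a b (m c d) = m (br a b c) d + m c (br a b d)) :
    (∀ p q r s, semidirectBracket br ρ p q (semidirectMul m μ r s) =
        semidirectMul m μ (semidirectBracket br ρ p q r) s +
          semidirectMul m μ r (semidirectBracket br ρ p q s)) ↔
      (∀ a b c v, μ (br a b c) v = ρ a b (μ c v) - μ c (ρ a b v)) ∧
        ∀ a b c v, ρ a (m b c) v = μ b (ρ a c v) + μ c (ρ a b v) := by
  constructor
  · intro hL'
    refine ⟨fun a b c v => ?_, fun a b c v => ?_⟩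
    · have h := congrArg Prod.snd (hL' (a, 0) (b, 0) (c, 0) (0, v))
      simp only [semidirectBracket, semidirectMul, Prod.snd_add, map_zero, add_zero] at h
      rw [h]
      abel
    · have h := congrArg Prod.snd (hL' (0, v) (a, 0) (b, 0) (c, 0))
      simp only [semidirectBracket, semidirectMul, Prod.snd_add, map_zero, add_zero,
        zero_add] at h
      rw [h, add_comm]
  · rintro ⟨hμ_bracket, hρ_mul⟩ ⟨a, u⟩ ⟨b, v⟩ ⟨c, w⟩ ⟨d, x⟩
    have hρ_mul' : ∀ a b c v, ρ (m b c) a v = μ b (ρ c a v) + μ c (ρ b a v) := by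
      intro a b c v
      rw [hρ, hρ_mul, hρ a c, hρ a b, map_neg, map_neg]
      abel
    refine Prod.ext (hL a b c d) ?_
    simp only [semidirectBracket, semidirectMul, Prod.snd_add, map_add]
    rw [eq_add_of_sub_eq (hμ_bracket a b c x).symm, eq_add_of_sub_eq (hμ_bracket a b d w).symm,
      hρ_mul, hρ_mul']
    abel

theorem isNPRepFun_iff_isNambuPoissonFun_semidirect (hA : IsNambuPoissonFun m br) :
    IsNPRepFun m br (fun a v => μ a v) (fun a b v => ρ a b v) ↔
      IsNambuPoissonFun (semidirectMul m μ) (semidirectBracket br ρ) := by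
  obtain ⟨hm, hbr, hL⟩ := hA
  constructor
  · rintro ⟨hμ, hρ, hμ_bracket, hρ_mul⟩
    exact ⟨(isCommAssocFun_semidirectMul_iff hm).2 hμ,
      (isThreeLieFun_semidirectBracket_iff hbr).2 hρ,
      (semidirect_leibniz_iff hρ.1 hL).2 ⟨hμ_bracket, hρ_mul⟩⟩
  · rintro ⟨hmul, hbracket, hleibniz⟩
    have hρ := (isThreeLieFun_semidirectBracket_iff hbr).1 hbracket
    exact ⟨(isCommAssocFun_semidirectMul_iff hm).1 hmul, hρ,
      (semidirect_leibniz_iff hρ.1 hL).1 hleibniz⟩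

theorem statement1_general {k : Type*} [Field k]
    {A : Type*} [AddCommGroup A] [Module k A]
    {V : Type*} [AddCommGroup V] [Module k V]
    (m : A →ₗ[k] A →ₗ[k] A) (br : A →ₗ[k] A →ₗ[k] A →ₗ[k] A)
    (μ : A →ₗ[k] V →ₗ[k] V) (ρ : A →ₗ[k] A →ₗ[k] V →ₗ[k] V)
    (hA : IsNambuPoissonFun (fun a b => m a b) (fun a b c => br a b c)) :
    IsNPRepFun (fun a b => m a b) (fun a b c => br a b c)
        (fun a v => μ a v) (fun a b v => ρ a b v) ↔
      IsNambuPoissonFun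
        (fun p q : A × V => (m p.1 q.1, μ p.1 q.2 + μ q.1 p.2))
        (fun p q r : A × V =>
          (br p.1 q.1 r.1, ρ p.1 q.1 r.2 + ρ q.1 r.1 p.2 + ρ r.1 p.1 q.2)) :=
  isNPRepFun_iff_isNambuPoissonFun_semidirect (μ := fun a => (μ a).toAddMonoidHom)
    (ρ := fun a b => (ρ a b).toAddMonoidHom) hA

theorem statement1 {k : Type*} [Field k] [CharZero k]
    {A : Type*} [AddCommGroup A] [Module k A]
    {V : Type*} [AddCommGroup V] [Module k V]
    (m : A →ₗ[k] A →ₗ[k] A) (br : A →ₗ[k] A →ₗ[k] A →ₗ[k] A)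
    (μ : A →ₗ[k] V →ₗ[k] V) (ρ : A →ₗ[k] A →ₗ[k] V →ₗ[k] V)
    (hA : IsNambuPoissonFun (fun a b => m a b) (fun a b c => br a b c))
    (hskew : ∀ a b v, ρ a b v = - ρ b a v) :
    IsNPRepFun (fun a b => m a b) (fun a b c => br a b c)
        (fun a v => μ a v) (fun a b v => ρ a b v) ↔
      IsNambuPoissonFun
        (fun p q : A × V => (m p.1 q.1, μ p.1 q.2 + μ q.1 p.2))
        (fun p q r : A × V =>
          (br p.1 q.1 r.1, ρ p.1 q.1 r.2 + ρ q.1 r.1 p.2 + ρ r.1 p.1 q.2)) :=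
  statement1_general m br μ ρ hA

end NPPaper
end

section
/- Let (A, ·, {,,}) be a Nambu-Poisson algebra over a field k of characteristic 0 and fix x₀ ∈ A. Define the bilinear bracket {a,b}_{x₀} := {x₀,a,b}. Then (A, ·, {,}_{x₀}) is a Poisson algebra. Moreover, if (V;μ,ρ) is a representation of the Nambu-Poisson algebra A and ρ_{x₀}: A→End(V) is defined by ρ_{x₀}(a)u := ρ(x₀,a)u, then (V;μ,ρ_{x₀}) is a representation of the Poisson algebra (A, ·, {,}_{x₀}). -/
/-!
Put `x₀` in the first slot everywhere. The Poisson axioms for `{x₀,-,-}` and `ρ(x₀,-)` are then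
instances of the Nambu-Poisson axioms, except that the fundamental identity and the commutator
axiom for `ρ` carry one extra term, involving `{x₀,a,x₀}`. That term vanishes: skew-symmetry gives
`{x₀,a,x₀} = -{x₀,a,x₀}`, and `A` has no `2`-torsion in characteristic `0`.
-/

namespace NPPaper

variable {A V : Type*} [AddCommGroup A] [AddCommGroup V]

section TorsionFree

variable {R : Type*} [CommRing R] [Module R A] [Module R V] [IsAddTorsionFree A]

theorem IsThreeLieFun.apply_self_left {br : A → A → A → A}
    (h : IsThreeLieFun br) (a c : A) : br a a c = 0 :=
  self_eq_neg.mp (h.1 a a c)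

theorem IsThreeLieFun.apply_self_right {br : A → A → A → A}
    (h : IsThreeLieFun br) (a c : A) : br a c a = 0 := by
  rw [h.2.1, h.apply_self_left, neg_zero]

theorem IsNambuPoissonFun.isPoissonFun {m : A → A → A} {br : A →ₗ[R] A →ₗ[R] A →ₗ[R] A}
    (h : IsNambuPoissonFun m (fun a b c => br a b c)) (x₀ : A) :
    IsPoissonFun m (fun a b => br x₀ a b) := by
  obtain ⟨hm, hbr, hleibniz⟩ := h
  refine ⟨hm, hbr.2.1 x₀, fun a b c => ?_, hleibniz x₀⟩
  simpa only [hbr.apply_self_right, map_zero, LinearMap.zero_apply, zero_add]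
    using hbr.2.2 x₀ a x₀ b c

theorem IsNPRepFun.isPoissonRepFun {m : A → A → A} {br : A → A → A → A} {μ : A → V → V}
    {ρ : A →ₗ[R] A →ₗ[R] V →ₗ[R] V} (hbr : IsThreeLieFun br)
    (hρ : IsNPRepFun m br μ (fun a b v => ρ a b v)) (x₀ : A) :
    IsPoissonRepFun m (fun a b => br x₀ a b) μ (fun a v => ρ x₀ a v) := by
  obtain ⟨hμ, ⟨-, hcomm, -⟩, hμbr, hρm⟩ := hρ
  refine ⟨hμ, fun a b v => ?_, hμbr x₀, hρm x₀⟩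
  simpa only [hbr.apply_self_right, map_zero, LinearMap.zero_apply, zero_add]
    using (hcomm x₀ a x₀ b v).symm

end TorsionFree

theorem statement2 {k : Type*} [Field k] [CharZero k]
    {A : Type*} [AddCommGroup A] [Module k A]
    {V : Type*} [AddCommGroup V] [Module k V]
    (m : A →ₗ[k] A →ₗ[k] A) (br : A →ₗ[k] A →ₗ[k] A →ₗ[k] A)
    (μ : A →ₗ[k] V →ₗ[k] V) (ρ : A →ₗ[k] A →ₗ[k] V →ₗ[k] V)
    (hA : IsNambuPoissonFun (fun a b => m a b) (fun a b c => br a b c))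
    (x₀ : A) :
    IsPoissonFun (fun a b => m a b) (fun a b => br x₀ a b) ∧
    (IsNPRepFun (fun a b => m a b) (fun a b c => br a b c)
        (fun a v => μ a v) (fun a b v => ρ a b v) →
      IsPoissonRepFun (fun a b => m a b) (fun a b => br x₀ a b)
        (fun a v => μ a v) (fun a v => ρ x₀ a v)) := by
  have : IsAddTorsionFree A := .of_isTorsionFree k A
  exact ⟨hA.isPoissonFun x₀, fun hρ => hρ.isPoissonRepFun hA.2.1 x₀⟩

end NPPaper
end

section
/- Let (A, ·, {,,}) be a Nambu-Poisson algebra over a field k of characteristic 0, (V;μ,ρ) a representation of it, and (φ,ψ) a Nambu-Poisson 2-cocycle of A with coefficients in V. Fix x₀ ∈ A and define ψ_{x₀}(a,b) := ψ(x₀,a,b). Then the pair (φ, ψ_{x₀}) is a Poisson 2-cocycle of the Poisson algebra (A, ·, {,}_{x₀}) (where {a,b}_{x₀} := {x₀,a,b}) with coefficients in the representation (V;μ,ρ_{x₀}) (where ρ_{x₀}(a)u := ρ(x₀,a)u). -/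
namespace NPPaper

variable {A V : Type*} [AddCommGroup A] [AddCommGroup V]

/-! The 3-Lie cocycle identity at `(x₀, a, x₀, b, c)` becomes the Lie cocycle identity of
`ψ x₀` once `br x₀ a x₀` and `ψ x₀ a x₀` are removed; these vanish by skew-symmetry because
there is no `2`-torsion. The Harrison part is untouched and the compatibility condition is
the Nambu-Poisson one at `a = x₀`. -/

theorem apply_left_self_eq_zero {X M : Type*} [AddGroup M] [IsAddTorsionFree M]
    {f : X → X → X → M} (h₁ : ∀ a b c, f a b c = -f b a c) (h₂ : ∀ a b c, f a b c = -f a c b)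
    (a b : X) : f a b a = 0 := by
  rw [h₂, self_eq_neg.mp (h₁ a a b), neg_zero]

section Contraction

variable {R : Type*} [CommRing R] [Module R A] [Module R V]
  [IsAddTorsionFree A] [IsAddTorsionFree V]
  {m : A →ₗ[R] A →ₗ[R] A} {br : A →ₗ[R] A →ₗ[R] A →ₗ[R] A}
  {μ : A →ₗ[R] V →ₗ[R] V} {ρ : A →ₗ[R] A →ₗ[R] V →ₗ[R] V}
  {φ : A →ₗ[R] A →ₗ[R] V} {ψ : A →ₗ[R] A →ₗ[R] A →ₗ[R] V}

theorem IsThreeLie2CocycleFun.lie_cocycle_contract (hbr : IsThreeLieFun (fun a b c => br a b c))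
    (hρ : IsThreeLieRepFun (fun a b c => br a b c) (fun a b v => ρ a b v))
    (hψ : IsThreeLie2CocycleFun (fun a b c => br a b c) (fun a b v => ρ a b v)
      (fun a b c => ψ a b c)) (x₀ a b c : A) :
    ρ x₀ a (ψ x₀ b c) + ρ x₀ b (ψ x₀ c a) + ρ x₀ c (ψ x₀ a b)
      + ψ x₀ a (br x₀ b c) + ψ x₀ b (br x₀ c a) + ψ x₀ c (br x₀ a b) = 0 := by
  obtain ⟨hbr₁, hbr₂, -⟩ := hbr
  obtain ⟨hρ₁, -, -⟩ := hρ
  obtain ⟨hψ₁, hψ₂, hψ₃⟩ := hψ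
  have h := hψ₃ x₀ a x₀ b c
  dsimp only at hbr₁ hbr₂ hρ₁ hψ₁ hψ₂ h
  rw [apply_left_self_eq_zero hbr₁ hbr₂, apply_left_self_eq_zero hψ₁ hψ₂, hρ₁ c x₀,
    hψ₂ x₀ (br x₀ a b) c] at h
  rw [hψ₂ x₀ c a, hbr₂ x₀ c a, map_neg, map_neg, ← sub_eq_zero_of_eq h]
  simp only [map_zero, LinearMap.zero_apply]
  abel

theorem IsNP2CocycleFun.isPoisson2CocycleFun_contract
    (hbr : IsThreeLieFun (fun a b c => br a b c))
    (hρ : IsThreeLieRepFun (fun a b c => br a b c) (fun a b v => ρ a b v))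
    (hcoc : IsNP2CocycleFun (fun a b => m a b) (fun a b c => br a b c) (fun a v => μ a v)
      (fun a b v => ρ a b v) (fun a b => φ a b) (fun a b c => ψ a b c)) (x₀ : A) :
    IsPoisson2CocycleFun (fun a b => m a b) (fun a b => br x₀ a b) (fun a v => μ a v)
      (fun a v => ρ x₀ a v) (fun a b => φ a b) (fun a b => ψ x₀ a b) :=
  ⟨hcoc.1, hcoc.2.1.2.1 x₀, hcoc.2.1.lie_cocycle_contract hbr hρ x₀, hcoc.2.2 x₀⟩

end Contraction

theorem statement7 {k : Type*} [Field k] [CharZero k]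
    {A : Type*} [AddCommGroup A] [Module k A]
    {V : Type*} [AddCommGroup V] [Module k V]
    (m : A →ₗ[k] A →ₗ[k] A) (br : A →ₗ[k] A →ₗ[k] A →ₗ[k] A)
    (μ : A →ₗ[k] V →ₗ[k] V) (ρ : A →ₗ[k] A →ₗ[k] V →ₗ[k] V)
    (φ : A →ₗ[k] A →ₗ[k] V) (ψ : A →ₗ[k] A →ₗ[k] A →ₗ[k] V)
    (hA : IsNambuPoissonFun (fun a b => m a b) (fun a b c => br a b c))
    (hrep : IsNPRepFun (fun a b => m a b) (fun a b c => br a b c)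
        (fun a v => μ a v) (fun a b v => ρ a b v))
    (hcoc : IsNP2CocycleFun (fun a b => m a b) (fun a b c => br a b c)
        (fun a v => μ a v) (fun a b v => ρ a b v)
        (fun a b => φ a b) (fun a b c => ψ a b c))
    (x₀ : A) :
    IsPoisson2CocycleFun (fun a b => m a b) (fun a b => br x₀ a b)
      (fun a v => μ a v) (fun a v => ρ x₀ a v)
      (fun a b => φ a b) (fun a b => ψ x₀ a b) := by
  have : IsAddTorsionFree A := .of_isTorsionFree k A
  have : IsAddTorsionFree V := .of_isTorsionFree k V
  exact hcoc.isPoisson2CocycleFun_contract hA.2.1 hrep.2.1 x₀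

end NPPaper
end

section
/- Let (A, ·, {,,}) be a Nambu-Poisson algebra over a field k of characteristic 0, φ₁: A×A→A a symmetric bilinear map, and ψ₁, ψ₂: A×A×A→A skew-symmetric trilinear maps. For t ∈ k define a·_t b := a·b + t φ₁(a,b) and {a,b,c}_t := {a,b,c} + t ψ₁(a,b,c) + t² ψ₂(a,b,c). Then (A, ·_t, {,,}_t) is a Nambu-Poisson algebra for every t ∈ k if and only if: (i) (φ₁,ψ₁) is a Nambu-Poisson 2-cocycle of A with coefficients in the adjoint representation (μ_ad(a)b = a·b, ρ_ad(a,b)c = {a,b,c}); (ii) (A, φ₁, ψ₂) is a Nambu-Poisson algebra; (iii) for all a,b,c,d,e ∈ A: ψ₂(a,b,{c,d,e}) + {a,b,ψ₂(c,d,e)} + ψ₁(a,b,ψ₁(c,d,e)) = ψ₂({a,b,c},d,e) + {ψ₂(a,b,c),d,e} + ψ₁(ψ₁(a,b,c),d,e) + ψ₂(c,{a,b,d},e) + {c,ψ₂(a,b,d),e} + ψ₁(c,ψ₁(a,b,d),e) + ψ₂(c,d,{a,b,e}) + {c,d,ψ₂(a,b,e)} + ψ₁(c,d,ψ₁(a,b,e));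 and ψ₁(a,b,ψ₂(c,d,e)) + ψ₂(a,b,ψ₁(c,d,e)) = ψ₁(ψ₂(a,b,c),d,e) + ψ₂(ψ₁(a,b,c),d,e) + ψ₁(c,ψ₂(a,b,d),e) + ψ₂(c,ψ₁(a,b,d),e) + ψ₁(c,d,ψ₂(a,b,e)) + ψ₂(c,d,ψ₁(a,b,e)); and ψ₂(a,b,c·d) + ψ₁(a,b,φ₁(c,d)) = φ₁(c,ψ₁(a,b,d)) + c·ψ₂(a,b,d) + φ₁(ψ₁(a,b,c),d) + ψ₂(a,b,c)·d. -/
/-!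
Each Nambu-Poisson axiom for `(·_t, {,,}_t)` is an identity in `A` that is polynomial in `t` of
degree at most four. Over an infinite field such an identity holds for every `t` iff each of its
coefficients vanishes: pair with linear functionals and use that a nonzero polynomial has finitely
many roots. The constant coefficients are the axioms of `A`, the leading ones those of `(φ₁, ψ₂)`,
the coefficients of `t` the cocycle conditions and the remaining ones the conditions (iii), after
rearranging terms by commutativity of `·` and cyclicity of `{,,}`.
-/

namespace NPPaper

variable {A V : Type*} [AddCommGroup A] [AddCommGroup V]

section Deformation

open Polynomial

variable {k : Type*} [Field k] [Infinite k]

theorem eq_zero_of_forall_sum_pow_smul_eq_zero {M : Type*} [AddCommGroup M] [Module k M]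
    {n : ℕ} {c : Fin n → M} (h : ∀ t : k, ∑ i : Fin n, t ^ (i : ℕ) • c i = 0) (i : Fin n) :
    c i = 0 := by
  refine (Module.forall_dual_apply_eq_zero_iff k (c i)).1 fun f => ?_
  let p : k[X] := ∑ j : Fin n, C (f (c j)) * X ^ (j : ℕ)
  have hp : p = 0 := Polynomial.funext fun t => by
    have hft := congr_arg f (h t)
    simp only [map_sum, map_smul, smul_eq_mul, map_zero] at hft
    simp only [p, eval_finsetSum, eval_mul, eval_C, eval_pow, eval_X, eval_zero, mul_comm, hft]
  simpa [p, finsetSum_coeff, coeff_C_mul_X_pow, Fin.val_inj] using congr_arg (coeff · i) hp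

theorem coeffs_eq_zero_of_forall_quartic_eq_zero {M : Type*} [AddCommGroup M] [Module k M]
    {c₀ c₁ c₂ c₃ c₄ : M} (h : ∀ t : k, c₀ + t • c₁ + t ^ 2 • c₂ + t ^ 3 • c₃ + t ^ 4 • c₄ = 0) :
    c₀ = 0 ∧ c₁ = 0 ∧ c₂ = 0 ∧ c₃ = 0 ∧ c₄ = 0 := by
  have hc := eq_zero_of_forall_sum_pow_smul_eq_zero (c := ![c₀, c₁, c₂, c₃, c₄]) fun t => by
    simpa [Fin.sum_univ_five] using h t
  exact ⟨hc 0, hc 1, hc 2, hc 3, hc 4⟩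

theorem coeffs_eq_zero_of_forall_cubic_eq_zero {M : Type*} [AddCommGroup M] [Module k M]
    {c₀ c₁ c₂ c₃ : M} (h : ∀ t : k, c₀ + t • c₁ + t ^ 2 • c₂ + t ^ 3 • c₃ = 0) :
    c₀ = 0 ∧ c₁ = 0 ∧ c₂ = 0 ∧ c₃ = 0 := by
  simpa using coeffs_eq_zero_of_forall_quartic_eq_zero (c₄ := (0 : M)) (by simpa using h)

theorem coeffs_eq_zero_of_forall_quadratic_eq_zero {M : Type*} [AddCommGroup M] [Module k M]
    {c₀ c₁ c₂ : M} (h : ∀ t : k, c₀ + t • c₁ + t ^ 2 • c₂ = 0) :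
    c₀ = 0 ∧ c₁ = 0 ∧ c₂ = 0 := by
  simpa using coeffs_eq_zero_of_forall_cubic_eq_zero (c₃ := (0 : M)) (by simpa using h)

variable [Module k A]

theorem forall_isCommAssocFun_add_smul_iff {m φ : A →ₗ[k] A →ₗ[k] A}
    (hm : IsCommAssocFun fun a b => m a b) :
    (∀ t : k, IsCommAssocFun fun a b => m a b + t • φ a b) ↔
      IsHarrison2CocycleFun (fun a b => m a b) (fun a b => m a b) (fun a b => φ a b) ∧
        IsCommAssocFun fun a b => φ a b := by
  obtain ⟨hm_comm, hm_assoc⟩ := hm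
  constructor
  · intro H
    have hφ_comm : ∀ a b, φ a b = φ b a := fun a b => by
      linear_combination (norm := module) (H 1).1 a b - hm_comm a b
    have hcoeff : ∀ a b c : A,
        m (m a b) c - m a (m b c) = 0 ∧
        m (φ a b) c + φ (m a b) c - m a (φ b c) - φ a (m b c) = 0 ∧
        φ (φ a b) c - φ a (φ b c) = 0 := fun a b c =>
      coeffs_eq_zero_of_forall_quadratic_eq_zero fun t => by
        have h := (H t).2 a b c
        simp only [map_add, map_smul, LinearMap.add_apply, LinearMap.smul_apply] at h
        linear_combination (norm := module) h
    refine ⟨⟨hφ_comm, fun a b c => ?_⟩, hφ_comm, fun a b c => ?_⟩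
    · linear_combination (norm := module) -(hcoeff a b c).2.1 + hm_comm (φ a b) c
    · exact sub_eq_zero.1 (hcoeff a b c).2.2
  · rintro ⟨⟨hφ_comm, hharrison⟩, -, hφ_assoc⟩ t
    refine ⟨fun a b => ?_, fun a b c => ?_⟩
    · linear_combination (norm := module) hm_comm a b + t • hφ_comm a b
    · simp only [map_add, map_smul, LinearMap.add_apply, LinearMap.smul_apply]
      linear_combination (norm := module) hm_assoc a b c - t • hharrison a b c
        + t • hm_comm (φ a b) c + t ^ 2 • hφ_assoc a b c

theorem forall_isThreeLieFun_add_smul_add_sq_smul_iff {br ψ₁ ψ₂ : A →ₗ[k] A →ₗ[k] A →ₗ[k] A}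
    (hbr : IsThreeLieFun fun a b c => br a b c) :
    (∀ t : k, IsThreeLieFun fun a b c => br a b c + t • ψ₁ a b c + t ^ 2 • ψ₂ a b c) ↔
      IsThreeLie2CocycleFun (fun a b c => br a b c) (fun a b c => br a b c)
          (fun a b c => ψ₁ a b c) ∧
        IsThreeLieFun (fun a b c => ψ₂ a b c) ∧
        (∀ a b c d e,
            ψ₂ a b (br c d e) + br a b (ψ₂ c d e) + ψ₁ a b (ψ₁ c d e) =
              ψ₂ (br a b c) d e + br (ψ₂ a b c) d e + ψ₁ (ψ₁ a b c) d e
              + ψ₂ c (br a b d) e + br c (ψ₂ a b d) e + ψ₁ c (ψ₁ a b d) e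
              + ψ₂ c d (br a b e) + br c d (ψ₂ a b e) + ψ₁ c d (ψ₁ a b e)) ∧
        (∀ a b c d e,
            ψ₁ a b (ψ₂ c d e) + ψ₂ a b (ψ₁ c d e) =
              ψ₁ (ψ₂ a b c) d e + ψ₂ (ψ₁ a b c) d e
              + ψ₁ c (ψ₂ a b d) e + ψ₂ c (ψ₁ a b d) e
              + ψ₁ c d (ψ₂ a b e) + ψ₂ c d (ψ₁ a b e)) := by
  obtain ⟨hbr_skew₁₂, hbr_skew₂₃, hbr_fund⟩ := hbr
  have hbr_cyc : ∀ x y z, br x y z = br y z x := fun x y z => by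
    linear_combination (norm := module) hbr_skew₁₂ x y z - hbr_skew₂₃ y x z
  constructor
  · intro H
    have hskew₁₂ : ∀ a b c : A, br a b c + br b a c = 0 ∧ ψ₁ a b c + ψ₁ b a c = 0 ∧
        ψ₂ a b c + ψ₂ b a c = 0 := fun a b c =>
      coeffs_eq_zero_of_forall_quadratic_eq_zero fun t => by
        linear_combination (norm := module) (H t).1 a b c
    have hskew₂₃ : ∀ a b c : A, br a b c + br a c b = 0 ∧ ψ₁ a b c + ψ₁ a c b = 0 ∧
        ψ₂ a b c + ψ₂ a c b = 0 := fun a b c =>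
      coeffs_eq_zero_of_forall_quadratic_eq_zero fun t => by
        linear_combination (norm := module) (H t).2.1 a b c
    have hfund : ∀ a b c d e : A,
        br a b (br c d e) - br (br a b c) d e - br c (br a b d) e - br c d (br a b e) = 0 ∧
        ψ₁ a b (br c d e) + br a b (ψ₁ c d e)
          - ψ₁ (br a b c) d e - br (ψ₁ a b c) d e
          - ψ₁ c (br a b d) e - br c (ψ₁ a b d) e
          - ψ₁ c d (br a b e) - br c d (ψ₁ a b e) = 0 ∧
        ψ₂ a b (br c d e) + ψ₁ a b (ψ₁ c d e) + br a b (ψ₂ c d e)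
          - ψ₂ (br a b c) d e - ψ₁ (ψ₁ a b c) d e - br (ψ₂ a b c) d e
          - ψ₂ c (br a b d) e - ψ₁ c (ψ₁ a b d) e - br c (ψ₂ a b d) e
          - ψ₂ c d (br a b e) - ψ₁ c d (ψ₁ a b e) - br c d (ψ₂ a b e) = 0 ∧
        ψ₂ a b (ψ₁ c d e) + ψ₁ a b (ψ₂ c d e)
          - ψ₂ (ψ₁ a b c) d e - ψ₁ (ψ₂ a b c) d e
          - ψ₂ c (ψ₁ a b d) e - ψ₁ c (ψ₂ a b d) e
          - ψ₂ c d (ψ₁ a b e) - ψ₁ c d (ψ₂ a b e) = 0 ∧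
        ψ₂ a b (ψ₂ c d e) - ψ₂ (ψ₂ a b c) d e - ψ₂ c (ψ₂ a b d) e - ψ₂ c d (ψ₂ a b e) = 0 :=
      fun a b c d e => coeffs_eq_zero_of_forall_quartic_eq_zero fun t => by
        have h := (H t).2.2 a b c d e
        simp only [map_add, map_smul, LinearMap.add_apply, LinearMap.smul_apply] at h
        linear_combination (norm := module) h
    refine ⟨⟨fun a b c => ?_, fun a b c => ?_, fun a b c d e => ?_⟩,
      ⟨fun a b c => ?_, fun a b c => ?_, fun a b c d e => ?_⟩,
      fun a b c d e => ?_, fun a b c d e => ?_⟩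
    · exact eq_neg_of_add_eq_zero_left (hskew₁₂ a b c).2.1
    · exact eq_neg_of_add_eq_zero_left (hskew₂₃ a b c).2.1
    · -- the bracket terms of the coefficient of `t` are brought to cocycle form by cyclicity
      linear_combination (norm := module) (hfund a b c d e).2.1
        + hbr_cyc (ψ₁ a b c) d e + hbr_cyc c (ψ₁ a b d) e + hbr_cyc (ψ₁ a b d) e c
    · exact eq_neg_of_add_eq_zero_left (hskew₁₂ a b c).2.2
    · exact eq_neg_of_add_eq_zero_left (hskew₂₃ a b c).2.2
    · linear_combination (norm := module) (hfund a b c d e).2.2.2.2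
    · linear_combination (norm := module) (hfund a b c d e).2.2.1
    · linear_combination (norm := module) (hfund a b c d e).2.2.2.1
  · rintro ⟨⟨hψ₁_skew₁₂, hψ₁_skew₂₃, hψ₁_cocycle⟩, ⟨hψ₂_skew₁₂, hψ₂_skew₂₃, hψ₂_fund⟩,
      hfund_t2, hfund_t3⟩ t
    refine ⟨fun a b c => ?_, fun a b c => ?_, fun a b c d e => ?_⟩
    · linear_combination (norm := module) hbr_skew₁₂ a b c + t • hψ₁_skew₁₂ a b c
        + t ^ 2 • hψ₂_skew₁₂ a b c
    · linear_combination (norm := module) hbr_skew₂₃ a b c + t • hψ₁_skew₂₃ a b c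
        + t ^ 2 • hψ₂_skew₂₃ a b c
    · simp only [map_add, map_smul, LinearMap.add_apply, LinearMap.smul_apply]
      linear_combination (norm := module) hbr_fund a b c d e
        + t • (hψ₁_cocycle a b c d e
          - hbr_cyc (ψ₁ a b c) d e - hbr_cyc c (ψ₁ a b d) e - hbr_cyc (ψ₁ a b d) e c)
        + t ^ 2 • hfund_t2 a b c d e + t ^ 3 • hfund_t3 a b c d e + t ^ 4 • hψ₂_fund a b c d e

theorem forall_leibniz_add_smul_iff {m φ : A →ₗ[k] A →ₗ[k] A}
    {br ψ₁ ψ₂ : A →ₗ[k] A →ₗ[k] A →ₗ[k] A} (hm_comm : ∀ a b, m a b = m b a)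
    (hleib : ∀ a b c d, br a b (m c d) = m (br a b c) d + m c (br a b d)) :
    (∀ t : k, ∀ a b c d,
        br a b (m c d + t • φ c d) + t • ψ₁ a b (m c d + t • φ c d)
            + t ^ 2 • ψ₂ a b (m c d + t • φ c d) =
          m (br a b c + t • ψ₁ a b c + t ^ 2 • ψ₂ a b c) d
            + t • φ (br a b c + t • ψ₁ a b c + t ^ 2 • ψ₂ a b c) d
          + (m c (br a b d + t • ψ₁ a b d + t ^ 2 • ψ₂ a b d)
            + t • φ c (br a b d + t • ψ₁ a b d + t ^ 2 • ψ₂ a b d))) ↔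
      (∀ a b c d, ψ₁ a b (m c d) + br a b (φ c d) =
          φ c (br a b d) + m c (ψ₁ a b d) + φ (br a b c) d + m d (ψ₁ a b c)) ∧
        (∀ a b c d, ψ₂ a b (φ c d) = φ (ψ₂ a b c) d + φ c (ψ₂ a b d)) ∧
        (∀ a b c d, ψ₂ a b (m c d) + ψ₁ a b (φ c d) =
          φ c (ψ₁ a b d) + m c (ψ₂ a b d) + φ (ψ₁ a b c) d + m (ψ₂ a b c) d) := by
  constructor
  · intro H
    have hcoeff : ∀ a b c d : A,
        br a b (m c d) - m (br a b c) d - m c (br a b d) = 0 ∧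
        ψ₁ a b (m c d) + br a b (φ c d)
          - m (ψ₁ a b c) d - φ (br a b c) d - m c (ψ₁ a b d) - φ c (br a b d) = 0 ∧
        ψ₂ a b (m c d) + ψ₁ a b (φ c d)
          - m (ψ₂ a b c) d - φ (ψ₁ a b c) d - m c (ψ₂ a b d) - φ c (ψ₁ a b d) = 0 ∧
        ψ₂ a b (φ c d) - φ (ψ₂ a b c) d - φ c (ψ₂ a b d) = 0 := fun a b c d =>
      coeffs_eq_zero_of_forall_cubic_eq_zero fun t => by
        have h := H t a b c d
        simp only [map_add, map_smul, LinearMap.add_apply, LinearMap.smul_apply] at h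
        linear_combination (norm := module) h
    refine ⟨fun a b c d => ?_, fun a b c d => ?_, fun a b c d => ?_⟩
    · linear_combination (norm := module) (hcoeff a b c d).2.1 + hm_comm (ψ₁ a b c) d
    · linear_combination (norm := module) (hcoeff a b c d).2.2.2
    · linear_combination (norm := module) (hcoeff a b c d).2.2.1
  · rintro ⟨hleib_t1, hleib_t3, hleib_t2⟩ t a b c d
    simp only [map_add, map_smul, LinearMap.add_apply, LinearMap.smul_apply]
    linear_combination (norm := module) hleib a b c d
      + t • (hleib_t1 a b c d + hm_comm d (ψ₁ a b c)) + t ^ 2 • hleib_t2 a b c d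
      + t ^ 3 • hleib_t3 a b c d

end Deformation

theorem statement8_general {k : Type*} [Field k] [CharZero k]
    {A : Type*} [AddCommGroup A] [Module k A]
    (m : A →ₗ[k] A →ₗ[k] A) (br : A →ₗ[k] A →ₗ[k] A →ₗ[k] A)
    (φ₁ : A →ₗ[k] A →ₗ[k] A) (ψ₁ ψ₂ : A →ₗ[k] A →ₗ[k] A →ₗ[k] A)
    (hA : IsNambuPoissonFun (fun a b => m a b) (fun a b c => br a b c)) :
    (∀ t : k, IsNambuPoissonFun
        (fun a b => m a b + t • φ₁ a b)
        (fun a b c => br a b c + t • ψ₁ a b c + (t ^ 2) • ψ₂ a b c)) ↔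
      (IsNP2CocycleFun (fun a b => m a b) (fun a b c => br a b c)
          (fun a b => m a b) (fun a b c => br a b c)
          (fun a b => φ₁ a b) (fun a b c => ψ₁ a b c)
        ∧ IsNambuPoissonFun (fun a b => φ₁ a b) (fun a b c => ψ₂ a b c)
        ∧ (∀ a b c d e,
            ψ₂ a b (br c d e) + br a b (ψ₂ c d e) + ψ₁ a b (ψ₁ c d e) =
              ψ₂ (br a b c) d e + br (ψ₂ a b c) d e + ψ₁ (ψ₁ a b c) d e
              + ψ₂ c (br a b d) e + br c (ψ₂ a b d) e + ψ₁ c (ψ₁ a b d) e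
              + ψ₂ c d (br a b e) + br c d (ψ₂ a b e) + ψ₁ c d (ψ₁ a b e))
        ∧ (∀ a b c d e,
            ψ₁ a b (ψ₂ c d e) + ψ₂ a b (ψ₁ c d e) =
              ψ₁ (ψ₂ a b c) d e + ψ₂ (ψ₁ a b c) d e
              + ψ₁ c (ψ₂ a b d) e + ψ₂ c (ψ₁ a b d) e
              + ψ₁ c d (ψ₂ a b e) + ψ₂ c d (ψ₁ a b e))
        ∧ (∀ a b c d,
            ψ₂ a b (m c d) + ψ₁ a b (φ₁ c d) =
              φ₁ c (ψ₁ a b d) + m c (ψ₂ a b d) + φ₁ (ψ₁ a b c) d + m (ψ₂ a b c) d)) := by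
  obtain ⟨hca, h3lie, hleib⟩ := hA
  have hpencil_ca := forall_isCommAssocFun_add_smul_iff (φ := φ₁) hca
  have hpencil_3lie := forall_isThreeLieFun_add_smul_add_sq_smul_iff (ψ₁ := ψ₁) (ψ₂ := ψ₂) h3lie
  have hpencil_leib := forall_leibniz_add_smul_iff (φ := φ₁) (ψ₁ := ψ₁) (ψ₂ := ψ₂) hca.1 hleib
  constructor
  · intro H
    obtain ⟨hharrison, hφ⟩ := hpencil_ca.1 fun t => (H t).1
    obtain ⟨hcocycle, hψ₂, hfund_t2, hfund_t3⟩ := hpencil_3lie.1 fun t => (H t).2.1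
    obtain ⟨hmixed, hleib₂, hleib_t2⟩ := hpencil_leib.1 fun t => (H t).2.2
    exact ⟨⟨hharrison, hcocycle, hmixed⟩, ⟨hφ, hψ₂, hleib₂⟩, hfund_t2, hfund_t3, hleib_t2⟩
  · rintro ⟨⟨hharrison, hcocycle, hmixed⟩, ⟨hφ, hψ₂, hleib₂⟩, hfund_t2, hfund_t3, hleib_t2⟩ t
    exact ⟨hpencil_ca.2 ⟨hharrison, hφ⟩ t, hpencil_3lie.2 ⟨hcocycle, hψ₂, hfund_t2, hfund_t3⟩ t,
      hpencil_leib.2 ⟨hmixed, hleib₂, hleib_t2⟩ t⟩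

theorem statement8 {k : Type*} [Field k] [CharZero k]
    {A : Type*} [AddCommGroup A] [Module k A]
    (m : A →ₗ[k] A →ₗ[k] A) (br : A →ₗ[k] A →ₗ[k] A →ₗ[k] A)
    (φ₁ : A →ₗ[k] A →ₗ[k] A) (ψ₁ ψ₂ : A →ₗ[k] A →ₗ[k] A →ₗ[k] A)
    (hA : IsNambuPoissonFun (fun a b => m a b) (fun a b c => br a b c))
    (hφsym : ∀ a b, φ₁ a b = φ₁ b a)
    (hψ₁a : ∀ a b c, ψ₁ a b c = - ψ₁ b a c) (hψ₁b : ∀ a b c, ψ₁ a b c = - ψ₁ a c b)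
    (hψ₂a : ∀ a b c, ψ₂ a b c = - ψ₂ b a c) (hψ₂b : ∀ a b c, ψ₂ a b c = - ψ₂ a c b) :
    (∀ t : k, IsNambuPoissonFun
        (fun a b => m a b + t • φ₁ a b)
        (fun a b c => br a b c + t • ψ₁ a b c + (t ^ 2) • ψ₂ a b c)) ↔
      (IsNP2CocycleFun (fun a b => m a b) (fun a b c => br a b c)
          (fun a b => m a b) (fun a b c => br a b c)
          (fun a b => φ₁ a b) (fun a b c => ψ₁ a b c)
        ∧ IsNambuPoissonFun (fun a b => φ₁ a b) (fun a b c => ψ₂ a b c)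
        ∧ (∀ a b c d e,
            ψ₂ a b (br c d e) + br a b (ψ₂ c d e) + ψ₁ a b (ψ₁ c d e) =
              ψ₂ (br a b c) d e + br (ψ₂ a b c) d e + ψ₁ (ψ₁ a b c) d e
              + ψ₂ c (br a b d) e + br c (ψ₂ a b d) e + ψ₁ c (ψ₁ a b d) e
              + ψ₂ c d (br a b e) + br c d (ψ₂ a b e) + ψ₁ c d (ψ₁ a b e))
        ∧ (∀ a b c d e,
            ψ₁ a b (ψ₂ c d e) + ψ₂ a b (ψ₁ c d e) =
              ψ₁ (ψ₂ a b c) d e + ψ₂ (ψ₁ a b c) d e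
              + ψ₁ c (ψ₂ a b d) e + ψ₂ c (ψ₁ a b d) e
              + ψ₁ c d (ψ₂ a b e) + ψ₂ c d (ψ₁ a b e))
        ∧ (∀ a b c d,
            ψ₂ a b (m c d) + ψ₁ a b (φ₁ c d) =
              φ₁ c (ψ₁ a b d) + m c (ψ₂ a b d) + φ₁ (ψ₁ a b c) d + m (ψ₂ a b c) d)) :=
  statement8_general m br φ₁ ψ₁ ψ₂ hA

end NPPaper
end

section
/- Let (A, ·, {,,}) be a Nambu-Poisson algebra over a field k of characteristic 0 and N: A→A a Nijenhuis operator on it. Then for every integer k ≥ 0, the power N^k: A→A is also a Nijenhuis operator on the Nambu-Poisson algebra A. -/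
namespace NPPaper

variable {A V : Type*} [AddCommGroup A] [AddCommGroup V]

/-! Both Nijenhuis identities for `N ^ n` are the diagonal case of two-parameter identities,
`m (N^p a) (N^q b) = N^q (m (N^p a) b) + N^p (m a (N^q b)) - N^p (N^q (m a b))` and its ternary
inclusion–exclusion analogue. These are proved by induction on the exponents: the step applies
the Nijenhuis identity of `N` to `(N^p a, N^q b)` and expands each resulting term by the
induction hypothesis. -/

section Powers

variable {R : Type*} [Semiring R] {A : Type*} [AddCommGroup A] [Module R A] (N : Module.End R A)

theorem pow_succ_apply_eq (n : ℕ) (x : A) : (N ^ (n + 1)) x = N ((N ^ n) x) := by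
  rw [pow_succ', Module.End.mul_apply]

theorem pow_apply_apply_comm (n : ℕ) (x : A) : (N ^ n) (N x) = N ((N ^ n) x) := by
  rw [← Module.End.mul_apply, ← pow_succ, pow_succ', Module.End.mul_apply]

theorem nijenhuis_pow_mul_pow {m : A → A → A}
    (hN : ∀ a b, m (N a) (N b) = N (m (N a) b + m a (N b) - N (m a b))) (p q : ℕ) (a b : A) :
    m ((N ^ p) a) ((N ^ q) b) =
      (N ^ q) (m ((N ^ p) a) b) + (N ^ p) (m a ((N ^ q) b)) - (N ^ p) ((N ^ q) (m a b)) := by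
  induction p generalizing q with
  | zero => simp only [pow_zero, Module.End.one_apply]; abel
  | succ p ihp =>
    induction q with
    | zero => simp only [pow_zero, Module.End.one_apply]; abel
    | succ q ihq =>
      -- `hᵢⱼ` is the identity at the exponents `(p + i, q + j)`
      have h₁₀ := ihq
      have h₀₁ := ihp (q + 1)
      have step := hN ((N ^ p) a) ((N ^ q) b)
      simp only [pow_succ_apply_eq] at h₁₀ h₀₁ ⊢
      rw [h₁₀, h₀₁, ihp q] at step
      simp only [map_add, map_sub, pow_apply_apply_comm] at step ⊢
      rw [step]
      abel

theorem nijenhuis_pow_bracket_pow {br : A → A → A → A}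
    (hN : ∀ a b c, br (N a) (N b) (N c) =
      N (br (N a) (N b) c + br (N a) b (N c) + br a (N b) (N c)
        - N (br (N a) b c + br a (N b) c + br a b (N c) - N (br a b c))))
    (p q r : ℕ) (a b c : A) :
    br ((N ^ p) a) ((N ^ q) b) ((N ^ r) c) =
      (N ^ r) (br ((N ^ p) a) ((N ^ q) b) c) + (N ^ q) (br ((N ^ p) a) b ((N ^ r) c))
        + (N ^ p) (br a ((N ^ q) b) ((N ^ r) c))
        - (N ^ q) ((N ^ r) (br ((N ^ p) a) b c)) - (N ^ p) ((N ^ r) (br a ((N ^ q) b) c))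
        - (N ^ p) ((N ^ q) (br a b ((N ^ r) c)))
        + (N ^ p) ((N ^ q) ((N ^ r) (br a b c))) := by
  induction p generalizing q r with
  | zero => simp only [pow_zero, Module.End.one_apply]; abel
  | succ p ihp =>
    induction q generalizing r with
    | zero => simp only [pow_zero, Module.End.one_apply]; abel
    | succ q ihq =>
      induction r with
      | zero => simp only [pow_zero, Module.End.one_apply]; abel
      | succ r ihr =>
        -- `hᵢⱼₖ` is the identity at the exponents `(p + i, q + j, r + k)`
        have h₁₁₀ := ihr
        have h₁₀₁ := ihq (r + 1)
        have h₀₁₁ := ihp (q + 1) (r + 1)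
        have h₁₀₀ := ihq r
        have h₀₁₀ := ihp (q + 1) r
        have h₀₀₁ := ihp q (r + 1)
        have step := hN ((N ^ p) a) ((N ^ q) b) ((N ^ r) c)
        simp only [pow_succ_apply_eq] at h₁₁₀ h₁₀₁ h₀₁₁ h₁₀₀ h₀₁₀ h₀₀₁ ⊢
        rw [h₁₁₀, h₁₀₁, h₀₁₁, h₁₀₀, h₀₁₀, h₀₀₁, ihp q r] at step
        simp only [map_add, map_sub, pow_apply_apply_comm] at step ⊢
        rw [step]
        abel

theorem isNijenhuisFun_pow {m : A → A → A} {br : A → A → A → A}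
    (hN : IsNijenhuisFun m br N) (n : ℕ) : IsNijenhuisFun m br ⇑(N ^ n) := by
  refine ⟨fun a b => ?_, fun a b c => ?_⟩
  · rw [nijenhuis_pow_mul_pow N hN.1 n n a b]
    simp only [map_add, map_sub]
  · rw [nijenhuis_pow_bracket_pow N hN.2 n n n a b c]
    simp only [map_add, map_sub]
    abel

end Powers

theorem statement9_general {k : Type*} [Field k]
    {A : Type*} [AddCommGroup A] [Module k A]
    (m : A →ₗ[k] A →ₗ[k] A) (br : A →ₗ[k] A →ₗ[k] A →ₗ[k] A)
    (N : Module.End k A)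
    (hN : IsNijenhuisFun (fun a b => m a b) (fun a b c => br a b c) (fun a => N a)) :
    ∀ n : ℕ, IsNijenhuisFun (fun a b => m a b) (fun a b c => br a b c)
      (fun a => (N ^ n) a) :=
  isNijenhuisFun_pow N hN

theorem statement9 {k : Type*} [Field k] [CharZero k]
    {A : Type*} [AddCommGroup A] [Module k A]
    (m : A →ₗ[k] A →ₗ[k] A) (br : A →ₗ[k] A →ₗ[k] A →ₗ[k] A)
    (hA : IsNambuPoissonFun (fun a b => m a b) (fun a b c => br a b c))
    (N : Module.End k A)
    (hN : IsNijenhuisFun (fun a b => m a b) (fun a b c => br a b c) (fun a => N a)) :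
    ∀ n : ℕ, IsNijenhuisFun (fun a b => m a b) (fun a b c => br a b c)
      (fun a => (N ^ n) a) :=
  statement9_general m br N hN

end NPPaper
end

section
/- Let (A, ⋄, *) be an NS-commutative algebra over a field k of characteristic 0 and set a⊙b := a⋄b + b⋄a + a*b. Then (A, ⊙) is a commutative associative algebra; the map μ_⋄: A→End(A), μ_⋄(a)b := a⋄b, makes (A;μ_⋄) a representation of (A,⊙) (i.e. μ_⋄(a⊙b) = μ_⋄(a)μ_⋄(b)); and the bilinear map φ_*(a,b) := a*b is a Harrison 2-cocycle of (A,⊙) with coefficients in (A;μ_⋄). -/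
namespace NPPaper

variable {A V : Type*} [AddCommGroup A] [AddCommGroup V]

theorem odotFun_comm {d s : A → A → A} (hs : ∀ a b, s a b = s b a) (a b : A) :
    odotFun d s a b = odotFun d s b a := by
  rw [odotFun, odotFun, hs]
  abel

theorem IsNSCommFun.left_comm {d s : A → A → A} (h : IsNSCommFun d s) (a b c : A) :
    d a (d b c) = d b (d a c) := by
  rw [h.2.1, h.2.1, odotFun_comm h.1]

/-- `a ⋄ (b * c) + a * (b ⊙ c)` is symmetric in `a, b` by the third axiom and in `b, c` by
commutativity of `*`, hence invariant under cyclic shifts. -/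
theorem IsNSCommFun.cyclic {d s : A → A → A} (h : IsNSCommFun d s) (a b c : A) :
    d a (s b c) + s a (odotFun d s b c) = d c (s a b) + s c (odotFun d s a b) :=
  calc d a (s b c) + s a (odotFun d s b c)
      = d b (s a c) + s b (odotFun d s a c) := h.2.2 a b c
    _ = d b (s c a) + s b (odotFun d s c a) := by rw [h.1 a c, odotFun_comm h.1 a c]
    _ = d c (s b a) + s c (odotFun d s b a) := h.2.2 b c a
    _ = d c (s a b) + s c (odotFun d s a b) := by rw [h.1 b a, odotFun_comm h.1 b a]

theorem IsNSCommFun.isHarrison2CocycleFun {d s : A → A → A} (h : IsNSCommFun d s) :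
    IsHarrison2CocycleFun (odotFun d s) d s := by
  refine ⟨h.1, fun a b c => ?_⟩
  rw [h.1 (odotFun d s a b) c]
  linear_combination (norm := abel) h.cyclic a b c

theorem IsNSCommFun.odotFun_assoc {d s : A → A → A} (h : IsNSCommFun d s)
    (hd : ∀ a x y, d a (x + y) = d a x + d a y) (a b c : A) :
    odotFun d s (odotFun d s a b) c = odotFun d s a (odotFun d s b c) := by
  have expand : ∀ x y z, d x (odotFun d s y z) = d x (d y z) + d x (d z y) + d x (s y z) := by
    intro x y z
    rw [odotFun, hd, hd]
  calc odotFun d s (odotFun d s a b) c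
      = d (odotFun d s a b) c + d c (odotFun d s a b) + s (odotFun d s a b) c := rfl
    _ = d a (d b c) + (d a (d c b) + d b (d c a) + d c (s a b)) + s c (odotFun d s a b) := by
      rw [← h.2.1, expand, h.left_comm c a, h.left_comm c b, h.1 _ c]
    _ = d a (d b c) + d a (d c b) + d b (d c a) + (d a (s b c) + s a (odotFun d s b c)) := by
      rw [h.cyclic a b c]
      abel
    _ = d a (odotFun d s b c) + d (odotFun d s b c) a + s a (odotFun d s b c) := by
      rw [expand, ← h.2.1 b c a]
      abel
    _ = odotFun d s a (odotFun d s b c) := rfl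

theorem IsNSCommFun.isCommAssocFun_odotFun {d s : A → A → A} (h : IsNSCommFun d s)
    (hd : ∀ a x y, d a (x + y) = d a x + d a y) : IsCommAssocFun (odotFun d s) :=
  ⟨odotFun_comm h.1, h.odotFun_assoc hd⟩

theorem statement11_general {k : Type*} [Field k]
    {A : Type*} [AddCommGroup A] [Module k A]
    (d s : A →ₗ[k] A →ₗ[k] A)
    (h : IsNSCommFun (fun a b => d a b) (fun a b => s a b)) :
    IsCommAssocFun (odotFun (fun a b => d a b) (fun a b => s a b))
      ∧ (∀ a b c, d (odotFun (fun a b => d a b) (fun a b => s a b) a b) c = d a (d b c))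
      ∧ IsHarrison2CocycleFun (odotFun (fun a b => d a b) (fun a b => s a b))
          (fun a v => d a v) (fun a b => s a b) :=
  ⟨h.isCommAssocFun_odotFun fun a => map_add (d a), fun a b c => (h.2.1 a b c).symm,
    h.isHarrison2CocycleFun⟩

theorem statement11 {k : Type*} [Field k] [CharZero k]
    {A : Type*} [AddCommGroup A] [Module k A]
    (d s : A →ₗ[k] A →ₗ[k] A)
    (h : IsNSCommFun (fun a b => d a b) (fun a b => s a b)) :
    IsCommAssocFun (odotFun (fun a b => d a b) (fun a b => s a b))
      ∧ (∀ a b c, d (odotFun (fun a b => d a b) (fun a b => s a b) a b) c = d a (d b c))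
      ∧ IsHarrison2CocycleFun (odotFun (fun a b => d a b) (fun a b => s a b))
          (fun a v => d a v) (fun a b => s a b) :=
  statement11_general d s h

end NPPaper
end

section
/- Let (A, [,,], ⟦,,⟧) be an NS-3-Lie algebra over a field k of characteristic 0 and set {{a,b,c}} := [a,b,c] + [b,c,a] + [c,a,b] + ⟦a,b,c⟧. Then (A, {{,,}}) is a 3-Lie algebra; the skew-symmetric bilinear map ρ(a,b)c := [a,b,c] makes (A;ρ) a representation of the 3-Lie algebra (A, {{,,}}); and the map ψ(a,b,c) := ⟦a,b,c⟧ is a 2-cocycle of (A, {{,,}}) with coefficients in (A;ρ). -/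
namespace NPPaper

variable {A V : Type*} [AddCommGroup A] [AddCommGroup V]

section PlainOperations

variable {t l : A → A → A → A}

theorem ttotFun_swap_left (ht : ∀ a b c, t a b c = - t b a c)
    (hl : ∀ a b c, l a b c = - l b a c) (a b c : A) :
    ttotFun t l a b c = - ttotFun t l b a c := by
  simp only [ttotFun]
  rw [ht a b c, ht b c a, ht c a b, hl a b c]
  abel

theorem ttotFun_swap_right (ht : ∀ a b c, t a b c = - t b a c)
    (hl : ∀ a b c, l a b c = - l a c b) (a b c : A) :
    ttotFun t l a b c = - ttotFun t l a c b := by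
  simp only [ttotFun]
  rw [ht a b c, ht b c a, ht c a b, hl a b c, ht b a c, ht c b a, ht a c b]
  abel

theorem IsNSThreeLieFun.isThreeLieRepFun (h : IsNSThreeLieFun t l) :
    IsThreeLieRepFun (ttotFun t l) t := by
  obtain ⟨ht, -, -, hρ, hρ', -⟩ := h
  refine ⟨ht, fun a b c d v => ?_, hρ'⟩
  rw [hρ a b c d v]
  abel

theorem IsNSThreeLieFun.isThreeLie2CocycleFun (h : IsNSThreeLieFun t l) :
    IsThreeLie2CocycleFun (ttotFun t l) t l :=
  ⟨h.2.1, h.2.2.1, h.2.2.2.2.2⟩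

end PlainOperations

section Trilinear

variable {R : Type*} [CommSemiring R] [Module R A] (t l : A →ₗ[R] A →ₗ[R] A →ₗ[R] A)

/- After expanding `{{a, b, X}}` with `X = {{c, d, e}}` and the right-hand side by trilinearity,
the `t a b`-terms are three instances of the first axiom, the `l`-terms are the third axiom, and
what is left, `t X a b + t b X a`, is the second axiom applied to `a, b` and to `b, a`. -/
theorem IsNSThreeLieFun.ttotFun_fundamental
    (h : IsNSThreeLieFun (fun a b c => t a b c) (fun a b c => l a b c)) (a b c d e : A) :
    ttotFun (fun a b c => t a b c) (fun a b c => l a b c) a b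
        (ttotFun (fun a b c => t a b c) (fun a b c => l a b c) c d e) =
      ttotFun (fun a b c => t a b c) (fun a b c => l a b c)
          (ttotFun (fun a b c => t a b c) (fun a b c => l a b c) a b c) d e
        + ttotFun (fun a b c => t a b c) (fun a b c => l a b c) c
          (ttotFun (fun a b c => t a b c) (fun a b c => l a b c) a b d) e
        + ttotFun (fun a b c => t a b c) (fun a b c => l a b c) c d
          (ttotFun (fun a b c => t a b c) (fun a b c => l a b c) a b e) := by
  obtain ⟨ht, -, -, hρ, hρ', hψ⟩ := h
  have hX := ht b (ttotFun (fun a b c => t a b c) (fun a b c => l a b c) c d e) a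
  have hba := hρ' c d e b a
  rw [ht e b a, ht c b a, ht d b a] at hba
  simp only [ttotFun, map_add, map_neg, LinearMap.add_apply]
    at hX hba hρ hρ' hψ ⊢
  linear_combination (norm := abel) hρ a b c d e + hρ a b d e c + hρ a b e c d
    + hψ a b c d e + hρ' c d e a b - hba + hX

theorem IsNSThreeLieFun.isThreeLieFun_ttotFun
    (h : IsNSThreeLieFun (fun a b c => t a b c) (fun a b c => l a b c)) :
    IsThreeLieFun (ttotFun (fun a b c => t a b c) (fun a b c => l a b c)) :=
  ⟨ttotFun_swap_left h.1 h.2.1, ttotFun_swap_right h.1 h.2.2.1, h.ttotFun_fundamental⟩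

end Trilinear

theorem statement12_general {k : Type*} [Field k]
    {A : Type*} [AddCommGroup A] [Module k A]
    (t l : A →ₗ[k] A →ₗ[k] A →ₗ[k] A)
    (h : IsNSThreeLieFun (fun a b c => t a b c) (fun a b c => l a b c)) :
    IsThreeLieFun (ttotFun (fun a b c => t a b c) (fun a b c => l a b c))
      ∧ IsThreeLieRepFun (ttotFun (fun a b c => t a b c) (fun a b c => l a b c))
          (fun a b v => t a b v)
      ∧ IsThreeLie2CocycleFun (ttotFun (fun a b c => t a b c) (fun a b c => l a b c))
          (fun a b v => t a b v) (fun a b c => l a b c) :=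
  ⟨h.isThreeLieFun_ttotFun, h.isThreeLieRepFun, h.isThreeLie2CocycleFun⟩

theorem statement12 {k : Type*} [Field k] [CharZero k]
    {A : Type*} [AddCommGroup A] [Module k A]
    (t l : A →ₗ[k] A →ₗ[k] A →ₗ[k] A)
    (h : IsNSThreeLieFun (fun a b c => t a b c) (fun a b c => l a b c)) :
    IsThreeLieFun (ttotFun (fun a b c => t a b c) (fun a b c => l a b c))
      ∧ IsThreeLieRepFun (ttotFun (fun a b c => t a b c) (fun a b c => l a b c))
          (fun a b v => t a b v)
      ∧ IsThreeLie2CocycleFun (ttotFun (fun a b c => t a b c) (fun a b c => l a b c))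
          (fun a b v => t a b v) (fun a b c => l a b c) :=
  statement12_general t l h

end NPPaper
end

section
/- Let (A, ·, {,,}) be a Nambu-Poisson algebra over a field k of characteristic 0 and N: A→A a Nijenhuis operator on it. Define a⋄_N b := N(a)·b, a*_N b := −N(a·b), [a,b,c]_N := {N(a),N(b),c}, and ⟦a,b,c⟧_N := −N({N(a),b,c} + {a,N(b),c} + {a,b,N(c)} − N({a,b,c})). Then (A, ⋄_N, *_N, [,,]_N, ⟦,,⟧_N) is an NS-Nambu-Poisson algebra, and its subadjacent Nambu-Poisson structure (a⊙b := a⋄_N b + b⋄_N a + a*_N b, {{a,b,c}} := [a,b,c]_N + [b,c,a]_N + [c,a,b]_N + ⟦a,b,c⟧_N) coincides with the deformed Nambu-Poisson structure a·_N b := N(a)·b + a·N(b) − N(a·b), {a,b,c}_N := {N(a),N(b),c} + {N(a),b,N(c)} + {a,N(b),N(c)} − N({N(a),b,c} + {a,N(b),c} + {a,b,N(c)} − N({a,b,c})). -/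
/-!
Let `T(a,b,c) = {Na,b,c} + {a,Nb,c} + {a,b,Nc} - N{a,b,c}` and consider the trivial deformation
`a ·_t b = a·b + t (a ·_N b)`, `{a,b,c}_t = {a,b,c} + t T(a,b,c) + t² {a,b,c}_N`. Then `1 + tN`
is a morphism from `(·_t, {,,}_t)` to `(·, {,,})`: the top `t`-coefficients of these identities
are the two Nijenhuis conditions, the others hold by definition. Hence `1 + tN` kills the
fundamental-identity and Leibniz defects of `(·_t, {,,}_t)`, and since `1 + tN` is injective on
polynomials in `t` (tested at the infinitely many `t ∈ k`), every `t`-coefficient of these defects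
vanishes. Up to `N` and the Nijenhuis conditions, the `t³`-coefficient of the fundamental identity
is the last NS-3-Lie axiom and the `t²`-coefficient of the Leibniz rule is the last compatibility
axiom. All other axioms follow directly, because `N` maps `·_N` and `{,,}_N` to `·` and `{,,}`.
-/

namespace NPPaper

variable {A V : Type*} [AddCommGroup A] [AddCommGroup V]

namespace IsThreeLieFun

variable {br : A → A → A → A}

theorem swap₁₂ (h : IsThreeLieFun br) (a b c : A) : br a b c = -br b a c := h.1 a b c

theorem swap₂₃ (h : IsThreeLieFun br) (a b c : A) : br a b c = -br a c b := h.2.1 a b c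

theorem cyclic (h : IsThreeLieFun br) (a b c : A) : br a b c = br b c a := by
  rw [h.swap₁₂, h.swap₂₃, neg_neg]

theorem fundamental (h : IsThreeLieFun br) (a b c d e : A) :
    br a b (br c d e) = br (br a b c) d e + br c (br a b d) e + br c d (br a b e) :=
  h.2.2 a b c d e

theorem bracket_bracket_left (h : IsThreeLieFun br) (a b c d e : A) :
    br (br a b c) d e = br a b (br c d e) + br b c (br a d e) + br c a (br b d e) := by
  rw [h.cyclic (br a b c) d e, h.fundamental, ← h.cyclic a d e, ← h.cyclic b d e,
    ← h.cyclic c d e, h.cyclic (br a d e) b c, ← h.cyclic c a (br b d e)]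
  abel

end IsThreeLieFun

namespace IsNambuPoissonFun

variable {m : A → A → A} {br : A → A → A → A}

theorem leibniz (h : IsNambuPoissonFun m br) (a b c d : A) :
    br a b (m c d) = m (br a b c) d + m c (br a b d) :=
  h.2.2 a b c d

theorem leibniz_left (h : IsNambuPoissonFun m br) (a b c d : A) :
    br (m a b) c d = m a (br b c d) + m b (br a c d) := by
  rw [h.2.1.cyclic (m a b) c d, h.leibniz, ← h.2.1.cyclic a c d, ← h.2.1.cyclic b c d,
    h.1.1 (br a c d) b, add_comm]

end IsNambuPoissonFun

section Deformation

variable {R : Type*} [CommRing R] [Module R A]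
  (m : A →ₗ[R] A →ₗ[R] A) (br : A →ₗ[R] A →ₗ[R] A →ₗ[R] A) (N : A →ₗ[R] A)

def deformedMul : A →ₗ[R] A →ₗ[R] A :=
  m ∘ₗ N + m.compl₂ N - m.compr₂ N

theorem deformedMul_apply (a b : A) :
    deformedMul m N a b = m (N a) b + m a (N b) - N (m a b) :=
  rfl

def firstOrderBracket : A →ₗ[R] A →ₗ[R] A →ₗ[R] A :=
  br ∘ₗ N + br.compl₂ N + br.compr₂ (LinearMap.lcomp R A N)
    - br.compr₂ (LinearMap.llcomp R A A A N)

theorem firstOrderBracket_apply (a b c : A) :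
    firstOrderBracket br N a b c = br (N a) b c + br a (N b) c + br a b (N c) - N (br a b c) :=
  rfl

def deformedBracket : A →ₗ[R] A →ₗ[R] A →ₗ[R] A :=
  (br ∘ₗ N).compl₂ N + (br ∘ₗ N).compr₂ (LinearMap.lcomp R A N)
    + (br.compl₂ N).compr₂ (LinearMap.lcomp R A N)
    - (firstOrderBracket br N).compr₂ (LinearMap.llcomp R A A A N)

theorem deformedBracket_apply (a b c : A) :
    deformedBracket br N a b c = br (N a) (N b) c + br (N a) b (N c) + br a (N b) (N c)
      - N (firstOrderBracket br N a b c) :=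
  rfl

def trivialDeformationMul (t : R) : A →ₗ[R] A →ₗ[R] A :=
  m + t • deformedMul m N

def trivialDeformationBracket (t : R) : A →ₗ[R] A →ₗ[R] A →ₗ[R] A :=
  br + t • firstOrderBracket br N + t ^ 2 • deformedBracket br N

def fundamentalIdentityDefect (ω ω' : A →ₗ[R] A →ₗ[R] A →ₗ[R] A) (a b c d e : A) : A :=
  ω a b (ω' c d e) - ω (ω' a b c) d e - ω c (ω' a b d) e - ω c d (ω' a b e)

def leibnizDefect (ω : A →ₗ[R] A →ₗ[R] A →ₗ[R] A) (κ : A →ₗ[R] A →ₗ[R] A) (a b c d : A) : A :=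
  ω a b (κ c d) - κ (ω a b c) d - κ c (ω a b d)

theorem fundamentalIdentityDefect_trivialDeformationBracket (t : R) (a b c d e : A) :
    fundamentalIdentityDefect (trivialDeformationBracket br N t)
        (trivialDeformationBracket br N t) a b c d e =
      ∑ i : Fin 5, t ^ (i : ℕ) • ![fundamentalIdentityDefect br br a b c d e,
        fundamentalIdentityDefect br (firstOrderBracket br N) a b c d e
          + fundamentalIdentityDefect (firstOrderBracket br N) br a b c d e,
        fundamentalIdentityDefect br (deformedBracket br N) a b c d e
          + fundamentalIdentityDefect (firstOrderBracket br N) (firstOrderBracket br N) a b c d e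
          + fundamentalIdentityDefect (deformedBracket br N) br a b c d e,
        fundamentalIdentityDefect (firstOrderBracket br N) (deformedBracket br N) a b c d e
          + fundamentalIdentityDefect (deformedBracket br N) (firstOrderBracket br N) a b c d e,
        fundamentalIdentityDefect (deformedBracket br N) (deformedBracket br N) a b c d e] i := by
  simp only [Fin.sum_univ_five, Matrix.cons_val, Fin.coe_ofNat_eq_mod, Nat.reduceMod, pow_zero,
    pow_one, one_smul, fundamentalIdentityDefect, trivialDeformationBracket, LinearMap.add_apply,
    LinearMap.smul_apply, map_add, map_smul]
  module

theorem leibnizDefect_trivialDeformation (t : R) (a b c d : A) :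
    leibnizDefect (trivialDeformationBracket br N t) (trivialDeformationMul m N t) a b c d =
      ∑ i : Fin 4, t ^ (i : ℕ) • ![leibnizDefect br m a b c d,
        leibnizDefect br (deformedMul m N) a b c d
          + leibnizDefect (firstOrderBracket br N) m a b c d,
        leibnizDefect (firstOrderBracket br N) (deformedMul m N) a b c d
          + leibnizDefect (deformedBracket br N) m a b c d,
        leibnizDefect (deformedBracket br N) (deformedMul m N) a b c d] i := by
  simp only [Fin.sum_univ_four, Matrix.cons_val, Fin.coe_ofNat_eq_mod, Nat.reduceMod, pow_zero,
    pow_one, one_smul, leibnizDefect, trivialDeformationBracket, trivialDeformationMul,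
    LinearMap.add_apply, LinearMap.smul_apply, map_add, map_smul]
  module

variable {m br N}

theorem IsNijenhuisFun.mul_eq_apply_deformedMul
    (hN : IsNijenhuisFun (fun a b => m a b) (fun a b c => br a b c) (fun a => N a)) (a b : A) :
    m (N a) (N b) = N (deformedMul m N a b) :=
  hN.1 a b

theorem IsNijenhuisFun.bracket_eq_apply_deformedBracket
    (hN : IsNijenhuisFun (fun a b => m a b) (fun a b c => br a b c) (fun a => N a)) (a b c : A) :
    br (N a) (N b) (N c) = N (deformedBracket br N a b c) :=
  hN.2 a b c

theorem deformedMul_comm (hm : ∀ a b, m a b = m b a) (a b : A) :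
    deformedMul m N a b = deformedMul m N b a := by
  rw [deformedMul_apply, deformedMul_apply, hm a b, hm (N a) b, hm a (N b), add_comm (m b (N a))]

theorem firstOrderBracket_swap₁₂ (h : ∀ a b c, br a b c = -br b a c) (a b c : A) :
    firstOrderBracket br N a b c = -firstOrderBracket br N b a c := by
  simp only [firstOrderBracket_apply]
  rw [h (N a), h a (N b), h a b (N c), h a b c, map_neg]
  abel

theorem firstOrderBracket_swap₂₃ (h : ∀ a b c, br a b c = -br a c b) (a b c : A) :
    firstOrderBracket br N a b c = -firstOrderBracket br N a c b := by
  simp only [firstOrderBracket_apply]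
  rw [h (N a), h a (N b), h a b (N c), h a b c, map_neg]
  abel

theorem deformedBracket_swap₁₂ (h : ∀ a b c, br a b c = -br b a c) (a b c : A) :
    deformedBracket br N a b c = -deformedBracket br N b a c := by
  simp only [deformedBracket_apply]
  rw [h (N a), h (N a) b, h a (N b), firstOrderBracket_swap₁₂ h, map_neg]
  abel

theorem deformedBracket_swap₂₃ (h : ∀ a b c, br a b c = -br a c b) (a b c : A) :
    deformedBracket br N a b c = -deformedBracket br N a c b := by
  simp only [deformedBracket_apply]
  rw [h (N a) (N b), h (N a) b, h a (N b), firstOrderBracket_swap₂₃ h, map_neg]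
  abel

theorem deformedBracket_cyclic (hbr : IsThreeLieFun (fun a b c => br a b c)) (a b c : A) :
    deformedBracket br N a b c = deformedBracket br N b c a := by
  rw [deformedBracket_swap₁₂ hbr.swap₁₂, deformedBracket_swap₂₃ hbr.swap₂₃, neg_neg]

theorem one_add_smul_apply_trivialDeformationMul
    (hN : ∀ a b, m (N a) (N b) = N (deformedMul m N a b)) (t : R) (a b : A) :
    (1 + t • N) (trivialDeformationMul m N t a b) = m ((1 + t • N) a) ((1 + t • N) b) := by
  simp only [trivialDeformationMul, LinearMap.add_apply, LinearMap.smul_apply,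
    Module.End.one_apply, map_add, map_smul, hN]
  simp only [deformedMul_apply, map_add, map_sub]
  module

theorem one_add_smul_apply_trivialDeformationBracket
    (hN : ∀ a b c, br (N a) (N b) (N c) = N (deformedBracket br N a b c)) (t : R) (a b c : A) :
    (1 + t • N) (trivialDeformationBracket br N t a b c) =
      br ((1 + t • N) a) ((1 + t • N) b) ((1 + t • N) c) := by
  simp only [trivialDeformationBracket, LinearMap.add_apply, LinearMap.smul_apply,
    Module.End.one_apply, map_add, map_smul, hN]
  simp only [deformedBracket_apply, firstOrderBracket_apply, map_add, map_sub]
  module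

theorem map_fundamentalIdentityDefect_eq_zero {ω ω' : A →ₗ[R] A →ₗ[R] A →ₗ[R] A}
    {φ : A →ₗ[R] A} (hω : ∀ a b c d e, fundamentalIdentityDefect ω ω a b c d e = 0)
    (hφ : ∀ a b c, φ (ω' a b c) = ω (φ a) (φ b) (φ c)) (a b c d e : A) :
    φ (fundamentalIdentityDefect ω' ω' a b c d e) = 0 := by
  simpa only [fundamentalIdentityDefect, map_sub, hφ] using hω (φ a) (φ b) (φ c) (φ d) (φ e)

theorem map_leibnizDefect_eq_zero {ω ω' : A →ₗ[R] A →ₗ[R] A →ₗ[R] A}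
    {κ κ' : A →ₗ[R] A →ₗ[R] A} {φ : A →ₗ[R] A} (hωκ : ∀ a b c d, leibnizDefect ω κ a b c d = 0)
    (hφω : ∀ a b c, φ (ω' a b c) = ω (φ a) (φ b) (φ c)) (hφκ : ∀ a b, φ (κ' a b) = κ (φ a) (φ b))
    (a b c d : A) : φ (leibnizDefect ω' κ' a b c d) = 0 := by
  simpa only [leibnizDefect, map_sub, hφω, hφκ] using hωκ (φ a) (φ b) (φ c) (φ d)

end Deformation

section Injectivity

open Polynomial

theorem coeff_sum_range_monomial {R : Type*} [Semiring R] {n : ℕ} (g : ℕ → R)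
    (hg : ∀ j, n ≤ j → g j = 0) (j : ℕ) :
    (∑ i ∈ Finset.range n, monomial i (g i)).coeff j = g j := by
  rw [finsetSum_coeff, Finset.sum_eq_single j]
  · simp
  · intro i _ hij
    simp [coeff_monomial, hij]
  · intro hj
    simp [hg j (not_lt.mp (Finset.mem_range.not.mp hj))]

theorem eq_zero_of_forall_one_add_smul_apply_sum_eq_zero {k : Type*} [Field k] [Infinite k]
    [Module k A] (N : A →ₗ[k] A) {n : ℕ} (D : Fin n → A)
    (h : ∀ t : k, (1 + t • N) (∑ i : Fin n, t ^ (i : ℕ) • D i) = 0) : D = 0 := by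
  set E : ℕ → A := fun j => if hj : j < n then D ⟨j, hj⟩ else 0
  have hE : ∀ j, n ≤ j → E j = 0 := fun j hj => dif_neg (not_lt.mpr hj)
  have hpoly : ∀ f : Module.Dual k A,
      ∑ j ∈ Finset.range n, monomial j (f (E j))
        + X * ∑ j ∈ Finset.range n, monomial j (f (N (E j))) = 0 := by
    intro f
    refine Polynomial.funext fun t => ?_
    have hDE : ∑ i : Fin n, t ^ (i : ℕ) • D i = ∑ j ∈ Finset.range n, t ^ j • E j := by
      rw [← Fin.sum_univ_eq_sum_range (fun j => t ^ j • E j)]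
      simp [E]
    have := congrArg f (h t)
    rw [hDE] at this
    simp only [map_zero, LinearMap.add_apply, Module.End.one_apply, LinearMap.smul_apply, map_add,
      map_smul, map_sum, smul_eq_mul] at this
    simp only [eval_add, eval_mul, eval_X, eval_finsetSum, eval_monomial, eval_zero,
      Finset.mul_sum, ← Finset.sum_add_distrib, ← this]
    refine Finset.sum_congr rfl fun j _ => ?_
    ring
  have hcoeff : ∀ f : Module.Dual k A, f (E 0) = 0 ∧ ∀ j, f (E (j + 1)) + f (N (E j)) = 0 := by
    intro f
    have h0 := congrArg (coeff · 0) (hpoly f)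
    have h1 := fun j => congrArg (coeff · (j + 1)) (hpoly f)
    simp only [coeff_add, coeff_X_mul_zero, coeff_X_mul, coeff_zero] at h0 h1
    have hfE : ∀ j, n ≤ j → f (E j) = 0 := fun j hj => by simp [hE j hj]
    have hfNE : ∀ j, n ≤ j → f (N (E j)) = 0 := fun j hj => by simp [hE j hj]
    refine ⟨by simpa [coeff_sum_range_monomial _ hfE] using h0, fun j => ?_⟩
    rw [← h1 j, coeff_sum_range_monomial _ hfE, coeff_sum_range_monomial _ hfNE]
  have hE0 : ∀ j, E j = 0 := by
    intro j
    induction j with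
    | zero => exact (Module.forall_dual_apply_eq_zero_iff k _).mp fun f => (hcoeff f).1
    | succ j ih =>
      refine (Module.forall_dual_apply_eq_zero_iff k _).mp fun f => ?_
      simpa [ih] using (hcoeff f).2 j
  funext i
  simpa [E] using hE0 i

end Injectivity

section Coefficients

variable {k : Type*} [Field k] [Infinite k] [Module k A]
  {m : A →ₗ[k] A →ₗ[k] A} {br : A →ₗ[k] A →ₗ[k] A →ₗ[k] A} {N : A →ₗ[k] A}

theorem fundamentalIdentityDefect_firstOrderBracket_deformedBracket_add
    (hbr : ∀ a b c d e, fundamentalIdentityDefect br br a b c d e = 0)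
    (hN : ∀ a b c, br (N a) (N b) (N c) = N (deformedBracket br N a b c)) (a b c d e : A) :
    fundamentalIdentityDefect (firstOrderBracket br N) (deformedBracket br N) a b c d e
      + fundamentalIdentityDefect (deformedBracket br N) (firstOrderBracket br N) a b c d e
      = 0 := by
  have h := eq_zero_of_forall_one_add_smul_apply_sum_eq_zero N _ fun t => by
    rw [← fundamentalIdentityDefect_trivialDeformationBracket]
    exact map_fundamentalIdentityDefect_eq_zero hbr
      (one_add_smul_apply_trivialDeformationBracket hN t) a b c d e
  simpa using congrFun h 3

theorem leibnizDefect_firstOrderBracket_deformedMul_add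
    (hbr : ∀ a b c d, leibnizDefect br m a b c d = 0)
    (hNm : ∀ a b, m (N a) (N b) = N (deformedMul m N a b))
    (hNb : ∀ a b c, br (N a) (N b) (N c) = N (deformedBracket br N a b c)) (a b c d : A) :
    leibnizDefect (firstOrderBracket br N) (deformedMul m N) a b c d
      + leibnizDefect (deformedBracket br N) m a b c d = 0 := by
  have h := eq_zero_of_forall_one_add_smul_apply_sum_eq_zero N _ fun t => by
    rw [← leibnizDefect_trivialDeformation]
    exact map_leibnizDefect_eq_zero hbr (one_add_smul_apply_trivialDeformationBracket hNb t)
      (one_add_smul_apply_trivialDeformationMul hNm t) a b c d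
  simpa using congrFun h 2

end Coefficients

section

variable {R : Type*} [CommRing R] [Module R A]
  {m : A →ₗ[R] A →ₗ[R] A} {br : A →ₗ[R] A →ₗ[R] A →ₗ[R] A} {N : A →ₗ[R] A}

theorem odotFun_eq_deformedMul (hm : ∀ a b, m a b = m b a) (a b : A) :
    odotFun (fun a b => m (N a) b) (fun a b => -N (m a b)) a b = deformedMul m N a b := by
  rw [odotFun, deformedMul_apply, hm (N b) a, sub_eq_add_neg]

theorem ttotFun_eq_deformedBracket (hbr : IsThreeLieFun (fun a b c => br a b c)) (a b c : A) :
    ttotFun (fun a b c => br (N a) (N b) c) (fun a b c => -N (firstOrderBracket br N a b c))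
      a b c = deformedBracket br N a b c := by
  rw [ttotFun, deformedBracket_apply, ← hbr.cyclic a (N b) (N c), hbr.cyclic (N c) (N a) b,
    sub_eq_add_neg]
  abel

theorem deformedMul_mul_add_mul_deformedMul (hm : IsCommAssocFun (fun a b => m a b))
    (a b c : A) :
    deformedMul m N a (m b c) + m a (deformedMul m N b c) =
      m (m (N a) b + m a (N b)) c + m (m a b) (N c) - N (m (m a b) c) := by
  simp only [deformedMul_apply, map_add, map_sub, LinearMap.add_apply, hm.2]
  abel

theorem isNSCommFun_of_nijenhuis (hm : IsCommAssocFun (fun a b => m a b))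
    (hN : ∀ a b, m (N a) (N b) = N (deformedMul m N a b)) :
    IsNSCommFun (fun a b => m (N a) b) (fun a b => -N (m a b)) := by
  have hodot := odotFun_eq_deformedMul (N := N) hm.1
  refine ⟨fun a b => by simp only [hm.1 a b], fun a b c => ?_, fun a b c => ?_⟩
  · simp only [hodot, ← hN, hm.2]
  · have hsymm : ∀ a b c, m (N a) (-N (m b c)) + -N (m a (deformedMul m N b c)) =
        -N (m (m (N a) b + m a (N b)) c + m (m a b) (N c) - N (m (m a b) c)) := by
      intro a b c
      rw [map_neg, hN, ← neg_add, ← map_add, deformedMul_mul_add_mul_deformedMul hm]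
    simp only [hodot, hsymm, hm.1 b a, hm.1 b (N a), hm.1 (N b) a, add_comm (m a (N b))]

end

section

variable {k : Type*} [Field k] [Infinite k] [Module k A]
  {m : A →ₗ[k] A →ₗ[k] A} {br : A →ₗ[k] A →ₗ[k] A →ₗ[k] A} {N : A →ₗ[k] A}

theorem isNSThreeLieFun_of_nijenhuis (hbr : IsThreeLieFun (fun a b c => br a b c))
    (hN : ∀ a b c, br (N a) (N b) (N c) = N (deformedBracket br N a b c)) :
    IsNSThreeLieFun (fun a b c => br (N a) (N b) c)
      (fun a b c => -N (firstOrderBracket br N a b c)) := by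
  have httot := ttotFun_eq_deformedBracket (N := N) hbr
  refine ⟨fun a b c => hbr.swap₁₂ _ _ _, fun a b c => ?_, fun a b c => ?_, fun a b c d e => ?_,
    fun a b c d e => ?_, fun a b c d e => ?_⟩
  · dsimp only
    rw [firstOrderBracket_swap₁₂ hbr.swap₁₂, map_neg]
  · dsimp only
    rw [firstOrderBracket_swap₂₃ hbr.swap₂₃, map_neg]
  · dsimp only
    rw [httot, httot, ← hN, ← hN]
    exact hbr.fundamental _ _ _ _ _
  · dsimp only
    rw [httot, ← hN]
    exact hbr.bracket_bracket_left _ _ _ _ _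
  · have hfi : ∀ a b c d e, fundamentalIdentityDefect br br a b c d e = 0 := fun a b c d e => by
      rw [fundamentalIdentityDefect, hbr.fundamental]
      abel
    have hmixed := congrArg N
      (fundamentalIdentityDefect_firstOrderBracket_deformedBracket_add hfi hN a b c d e)
    simp only [fundamentalIdentityDefect, map_add, map_sub, map_zero] at hmixed
    dsimp only
    simp only [httot, map_neg, hN]
    rw [← deformedBracket_cyclic hbr _ d e, ← deformedBracket_cyclic hbr _ e c,
      ← deformedBracket_cyclic hbr c _ e]
    linear_combination (norm := abel) -hmixed

theorem leibnizCompat_of_nijenhuis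
    (hA : IsNambuPoissonFun (fun a b => m a b) (fun a b c => br a b c))
    (hNm : ∀ a b, m (N a) (N b) = N (deformedMul m N a b))
    (hNb : ∀ a b c, br (N a) (N b) (N c) = N (deformedBracket br N a b c)) (a b c x : A) :
    -N (firstOrderBracket br N a b (deformedMul m N c x)) + br (N a) (N b) (-N (m c x)) =
      -N (m c (deformedBracket br N a b x)) + m (N c) (-N (firstOrderBracket br N a b x))
        + -N (m (deformedBracket br N a b c) x) + m (N x) (-N (firstOrderBracket br N a b c)) := by
  have hleib : ∀ a b c d, leibnizDefect br m a b c d = 0 := fun a b c d => by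
    rw [leibnizDefect, hA.leibniz]
    abel
  have hmixed := congrArg N
    (leibnizDefect_firstOrderBracket_deformedMul_add hleib hNm hNb a b c x)
  simp only [leibnizDefect, map_add, map_sub, map_zero] at hmixed
  simp only [map_neg, hNb, hNm]
  rw [deformedMul_comm hA.1.1 x]
  linear_combination (norm := abel) -hmixed

theorem isNSNambuPoissonFun_of_nijenhuis
    (hA : IsNambuPoissonFun (fun a b => m a b) (fun a b c => br a b c))
    (hN : IsNijenhuisFun (fun a b => m a b) (fun a b c => br a b c) (fun a => N a)) :
    IsNSNambuPoissonFun (fun a b => m (N a) b) (fun a b => -N (m a b))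
      (fun a b c => br (N a) (N b) c) (fun a b c => -N (firstOrderBracket br N a b c)) := by
  have hodot := odotFun_eq_deformedMul (N := N) hA.1.1
  have httot := ttotFun_eq_deformedBracket (N := N) hA.2.1
  refine ⟨isNSCommFun_of_nijenhuis hA.1 hN.mul_eq_apply_deformedMul,
    isNSThreeLieFun_of_nijenhuis hA.2.1 hN.bracket_eq_apply_deformedBracket,
    fun a b c x => ?_, fun a b c x => ?_, fun a b c x => ?_⟩
  · dsimp only
    rw [httot, ← hN.bracket_eq_apply_deformedBracket, hA.leibniz]
    abel
  · dsimp only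
    rw [hodot, ← hN.mul_eq_apply_deformedMul]
    exact hA.leibniz_left _ _ _ _
  · dsimp only
    rw [hodot, httot, httot]
    exact leibnizCompat_of_nijenhuis hA hN.mul_eq_apply_deformedMul
      hN.bracket_eq_apply_deformedBracket a b c x

end

theorem statement15 {k : Type*} [Field k] [CharZero k]
    {A : Type*} [AddCommGroup A] [Module k A]
    (m : A →ₗ[k] A →ₗ[k] A) (br : A →ₗ[k] A →ₗ[k] A →ₗ[k] A)
    (hA : IsNambuPoissonFun (fun a b => m a b) (fun a b c => br a b c))
    (N : A →ₗ[k] A)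
    (hN : IsNijenhuisFun (fun a b => m a b) (fun a b c => br a b c) (fun a => N a)) :
    IsNSNambuPoissonFun
        (fun a b => m (N a) b) (fun a b => - N (m a b))
        (fun a b c => br (N a) (N b) c)
        (fun a b c => - N (br (N a) b c + br a (N b) c + br a b (N c) - N (br a b c)))
      ∧ (∀ a b, odotFun (fun a b => m (N a) b) (fun a b => - N (m a b)) a b
          = m (N a) b + m a (N b) - N (m a b))
      ∧ (∀ a b c, ttotFun (fun a b c => br (N a) (N b) c)
            (fun a b c => - N (br (N a) b c + br a (N b) c + br a b (N c) - N (br a b c)))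
            a b c
          = br (N a) (N b) c + br (N a) b (N c) + br a (N b) (N c)
            - N (br (N a) b c + br a (N b) c + br a b (N c) - N (br a b c))) :=
  ⟨isNSNambuPoissonFun_of_nijenhuis hA hN, odotFun_eq_deformedMul hA.1.1,
    ttotFun_eq_deformedBracket hA.2.1⟩

end NPPaper
end

section
/- Let (A, ·, {,,}) be a Nambu-Poisson algebra over a field k of characteristic 0, (V;μ,ρ) a representation, and (φ,ψ) a Nambu-Poisson 2-cocycle of A with coefficients in V. Then a linear map r: V→A is a (φ,ψ)-twisted O-operator on A with respect to V if and only if the graph Graph(r) = {(r(u), u) | u ∈ V} is a subalgebra of the (φ,ψ)-twisted semidirect product Nambu-Poisson algebra A ⋉_{(φ,ψ)} V, i.e. Graph(r) is closed under the operations (a,u)·_{⋉φ}(b,v) := (a·b, μ(a)v + μ(b)u + φ(a,b)) and {(a,u),(b,v),(c,w)}_{⋉ψ} := ({a,b,c}, ρ(a,b)w + ρ(b,c)u + ρ(c,a)v + ψ(a,b,c)). -/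
namespace NPPaper

variable {A V : Type*} [AddCommGroup A] [AddCommGroup V]

theorem exists_graph_eq_iff {α β : Type*} {f : β → α} {a : α} {x : β} :
    (∃ u, (f u, u) = (a, x)) ↔ a = f x := by
  simp [eq_comm]

theorem statement17_general {k : Type*} [Field k]
    {A : Type*} [AddCommGroup A] [Module k A]
    {V : Type*} [AddCommGroup V] [Module k V]
    (m : A →ₗ[k] A →ₗ[k] A) (br : A →ₗ[k] A →ₗ[k] A →ₗ[k] A)
    (μ : A →ₗ[k] V →ₗ[k] V) (ρ : A →ₗ[k] A →ₗ[k] V →ₗ[k] V)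
    (φ : A →ₗ[k] A →ₗ[k] V) (ψ : A →ₗ[k] A →ₗ[k] A →ₗ[k] V)
    (r : V →ₗ[k] A) :
    IsTwistedOFun (fun a b => m a b) (fun a b c => br a b c)
        (fun a v => μ a v) (fun a b v => ρ a b v)
        (fun a b => φ a b) (fun a b c => ψ a b c) (fun v => r v) ↔
      ((∀ p q : A × V,
          p ∈ Set.range (fun u : V => ((r u : A), u)) →
          q ∈ Set.range (fun u : V => ((r u : A), u)) →
          (m p.1 q.1, μ p.1 q.2 + μ q.1 p.2 + φ p.1 q.1)
            ∈ Set.range (fun u : V => ((r u : A), u))) ∧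
       (∀ p q w : A × V,
          p ∈ Set.range (fun u : V => ((r u : A), u)) →
          q ∈ Set.range (fun u : V => ((r u : A), u)) →
          w ∈ Set.range (fun u : V => ((r u : A), u)) →
          (br p.1 q.1 w.1,
            ρ p.1 q.1 w.2 + ρ q.1 w.1 p.2 + ρ w.1 p.1 q.2 + ψ p.1 q.1 w.1)
            ∈ Set.range (fun u : V => ((r u : A), u)))) := by
  simp only [Set.mem_range, forall_exists_index, forall_apply_eq_imp_iff, forall_comm (α := A × V)]
  simp only [exists_graph_eq_iff, IsTwistedOFun]

theorem statement17 {k : Type*} [Field k] [CharZero k]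
    {A : Type*} [AddCommGroup A] [Module k A]
    {V : Type*} [AddCommGroup V] [Module k V]
    (m : A →ₗ[k] A →ₗ[k] A) (br : A →ₗ[k] A →ₗ[k] A →ₗ[k] A)
    (μ : A →ₗ[k] V →ₗ[k] V) (ρ : A →ₗ[k] A →ₗ[k] V →ₗ[k] V)
    (φ : A →ₗ[k] A →ₗ[k] V) (ψ : A →ₗ[k] A →ₗ[k] A →ₗ[k] V)
    (hA : IsNambuPoissonFun (fun a b => m a b) (fun a b c => br a b c))
    (hrep : IsNPRepFun (fun a b => m a b) (fun a b c => br a b c)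
        (fun a v => μ a v) (fun a b v => ρ a b v))
    (hcoc : IsNP2CocycleFun (fun a b => m a b) (fun a b c => br a b c)
        (fun a v => μ a v) (fun a b v => ρ a b v)
        (fun a b => φ a b) (fun a b c => ψ a b c))
    (r : V →ₗ[k] A) :
    IsTwistedOFun (fun a b => m a b) (fun a b c => br a b c)
        (fun a v => μ a v) (fun a b v => ρ a b v)
        (fun a b => φ a b) (fun a b c => ψ a b c) (fun v => r v) ↔
      ((∀ p q : A × V,
          p ∈ Set.range (fun u : V => ((r u : A), u)) →
          q ∈ Set.range (fun u : V => ((r u : A), u)) →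
          (m p.1 q.1, μ p.1 q.2 + μ q.1 p.2 + φ p.1 q.1)
            ∈ Set.range (fun u : V => ((r u : A), u))) ∧
       (∀ p q w : A × V,
          p ∈ Set.range (fun u : V => ((r u : A), u)) →
          q ∈ Set.range (fun u : V => ((r u : A), u)) →
          w ∈ Set.range (fun u : V => ((r u : A), u)) →
          (br p.1 q.1 w.1,
            ρ p.1 q.1 w.2 + ρ q.1 w.1 p.2 + ρ w.1 p.1 q.2 + ψ p.1 q.1 w.1)
            ∈ Set.range (fun u : V => ((r u : A), u)))) :=
  statement17_general m br μ ρ φ ψ r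

end NPPaper
end
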